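/- arXiv:2404.18969 — 9 statements merged into one kernel-verified Lean document; each statement's English description precedes it below -/
import Mathlib

section
/- Let p be a fixed real number and for q with p^3 > (27/4)q^2 let S(q) denote the difference between the largest and smallest real roots of x^3 - p x + q = 0. If 2*(p/3)^{3/2} > |q1| > |q2| (so both cubics have three distinct real roots), then S(q1) < S(q2). -/
set_option maxHeartbeats 800000

/-- Auxiliary lemma: structure of extreme roots of `x^3 - p x + q` when
`|q| < 2 m^3`, `p = 3 m^2`, `m > 0`. -/
lemma spread_cubic_aux (m p q a b : ℝ) (hm : 0 < m) (hp : p = 3 * m ^ 2)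
    (hq : |q| < 2 * m ^ 3)
    (ha : a ^ 3 - p * a + q = 0) (hb : b ^ 3 - p * b + q = 0)
    (hmax : ∀ x : ℝ, x ^ 3 - p * x + q = 0 → x ≤ a)
    (hmin : ∀ x : ℝ, x ^ 3 - p * x + q = 0 → b ≤ x) :
    m < a ∧ b < -m ∧ (a - b) ^ 2 = 4 * p - 3 * (a + b) ^ 2 ∧
      q = (a + b) ^ 3 - p * (a + b) ∧ |a + b| ≤ m := by
  have hqle : q < 2 * m ^ 3 := lt_of_abs_lt hq
  have hqge : -(2 * m ^ 3) < q := neg_lt_of_abs_lt hq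
  have hcont : Continuous fun x : ℝ => x ^ 3 - p * x + q := by fun_prop
  -- root in [m, 2m]
  have hr1 : ∃ r ∈ Set.Icc m (2 * m), r ^ 3 - p * r + q = 0 := by
    have h := intermediate_value_Icc (by linarith : m ≤ 2 * m) hcont.continuousOn
    have h0 : (0 : ℝ) ∈ Set.Icc (m ^ 3 - p * m + q) ((2 * m) ^ 3 - p * (2 * m) + q) := by
      constructor <;> nlinarith [hp, hqle, hqge]
    obtain ⟨r, hr, hr0⟩ := h h0
    exact ⟨r, hr, hr0⟩
  have hr2 : ∃ r ∈ Set.Icc (-(2 * m)) (-m), r ^ 3 - p * r + q = 0 := by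
    have h := intermediate_value_Icc (by linarith : -(2 * m) ≤ -m) hcont.continuousOn
    have h0 : (0 : ℝ) ∈ Set.Icc ((-(2 * m)) ^ 3 - p * (-(2 * m)) + q)
        ((-m) ^ 3 - p * (-m) + q) := by
      constructor <;> nlinarith [hp, hqle, hqge]
    obtain ⟨r, hr, hr0⟩ := h h0
    exact ⟨r, hr, hr0⟩
  obtain ⟨r, ⟨hrm, _⟩, hr0⟩ := hr1
  obtain ⟨r', ⟨_, hr'm⟩, hr'0⟩ := hr2
  have hrne : r ≠ m := by
    intro h; rw [h] at hr0; nlinarith [hp, hqle]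
  have hr'ne : r' ≠ -m := by
    intro h; rw [h] at hr'0; nlinarith [hp, hqge]
  have hma : m < a := lt_of_lt_of_le (lt_of_le_of_ne hrm (Ne.symm hrne)) (hmax r hr0)
  have hmb : b < -m := lt_of_le_of_lt (hmin r' hr'0) (lt_of_le_of_ne hr'm hr'ne)
  have hab : b < a := by linarith
  -- a^2 + ab + b^2 = p
  have hP : a ^ 2 + a * b + b ^ 2 = p := by
    have h : (a - b) * (a ^ 2 + a * b + b ^ 2 - p) = 0 := by
      linear_combination ha - hb
    rcases mul_eq_zero.mp h with h | h
    · exfalso; linarith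
    · linarith
  have hsq : (a - b) ^ 2 = 4 * p - 3 * (a + b) ^ 2 := by linarith [hP]
  have hqeq : q = (a + b) ^ 3 - p * (a + b) := by
    linear_combination ha - (2 * a + b) * hP
  -- middle root c = -(a+b)
  have hc : (-(a + b)) ^ 3 - p * (-(a + b)) + q = 0 := by linear_combination hqeq
  have hcb : b ≤ -(a + b) := hmin _ hc
  have hca : -(a + b) ≤ a := hmax _ hc
  have habs : |a + b| ≤ m := by
    rw [abs_le]
    constructor
    · -- a + b ≥ -m, i.e. c = -(a+b) ≤ m
      by_contra h
      push_neg at h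
      have hcgt : m < -(a + b) := by linarith
      have hac : a = -(a + b) := by
        by_contra hne
        have h2 : (a - (-(a + b))) * (a ^ 2 + a * (-(a + b)) + (-(a + b)) ^ 2 - p) = 0 := by
          linear_combination ha - hc
        rcases mul_eq_zero.mp h2 with h3 | h3
        · exact hne (by linarith)
        · nlinarith [mul_pos (sub_pos.mpr hma) (sub_pos.mpr hcgt), hm, hma, hcgt]
      have hbval : b = -2 * a := by linarith
      have hb' : (-2 * a) ^ 3 - p * (-2 * a) + q = 0 := by rw [← hbval]; exact hb
      have h9 : 3 * a * (3 * a ^ 2 - p) = 0 := by linear_combination ha - hb'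
      rcases mul_eq_zero.mp h9 with h3 | h3
      · nlinarith [hma, hm]
      · nlinarith [hma, hm]
    · -- a + b ≤ m, i.e. c = -(a+b) ≥ -m
      by_contra h
      push_neg at h
      have hclt : -(a + b) < -m := by linarith
      have hbc : b = -(a + b) := by
        by_contra hne
        have h2 : (b - (-(a + b))) * (b ^ 2 + b * (-(a + b)) + (-(a + b)) ^ 2 - p) = 0 := by
          linear_combination hb - hc
        rcases mul_eq_zero.mp h2 with h3 | h3
        · exact hne (by linarith)
        · nlinarith [mul_pos (by linarith : (0:ℝ) < -m - b)
            (by linarith : (0:ℝ) < -m - (-(a + b))), hm, hmb, hclt]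
      have haval : a = -2 * b := by linarith
      have ha' : (-2 * b) ^ 3 - p * (-2 * b) + q = 0 := by rw [← haval]; exact ha
      have h9 : 3 * b * (3 * b ^ 2 - p) = 0 := by linear_combination hb - ha'
      rcases mul_eq_zero.mp h9 with h3 | h3
      · nlinarith [hmb, hm]
      · nlinarith [hmb, hm]
  exact ⟨hma, hmb, hsq, hqeq, habs⟩

/-- For fixed `p`, the spread of `x^3 - p x + q` is strictly decreasing in `|q|`:
if `2 (p/3)^{3/2} > |q1| > |q2|` then `S(q1) < S(q2)`. -/
theorem spread_cubic_monotone (p q1 q2 : ℝ)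
    (hq1 : 2 * (p / 3) ^ ((3 : ℝ) / 2) > |q1|) (hq12 : |q1| > |q2|)
    (a1 b1 a2 b2 : ℝ)
    (ha1 : a1 ^ 3 - p * a1 + q1 = 0) (hb1 : b1 ^ 3 - p * b1 + q1 = 0)
    (hmax1 : ∀ x : ℝ, x ^ 3 - p * x + q1 = 0 → x ≤ a1)
    (hmin1 : ∀ x : ℝ, x ^ 3 - p * x + q1 = 0 → b1 ≤ x)
    (ha2 : a2 ^ 3 - p * a2 + q2 = 0) (hb2 : b2 ^ 3 - p * b2 + q2 = 0)
    (hmax2 : ∀ x : ℝ, x ^ 3 - p * x + q2 = 0 → x ≤ a2)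
    (hmin2 : ∀ x : ℝ, x ^ 3 - p * x + q2 = 0 → b2 ≤ x) :
    a1 - b1 < a2 - b2 := by
  -- first: p > 0
  have hp3 : 0 < p / 3 := by
    by_contra h
    push_neg at h
    have h0 : (p / 3) ^ ((3 : ℝ) / 2) ≤ 0 := by
      rcases lt_or_eq_of_le h with h' | h'
      · rw [Real.rpow_def_of_neg h']
        have hc : Real.cos ((3 : ℝ) / 2 * Real.pi) = 0 := by
          have he : (3 : ℝ) / 2 * Real.pi = Real.pi / 2 + Real.pi := by ring
          rw [he, Real.cos_add_pi, Real.cos_pi_div_two, neg_zero]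
        rw [hc, mul_zero]
      · rw [h', Real.zero_rpow (by norm_num)]
    have := abs_nonneg q1
    linarith
  set m := Real.sqrt (p / 3) with hmdef
  have hm : 0 < m := Real.sqrt_pos.mpr hp3
  have hm2 : m ^ 2 = p / 3 := Real.sq_sqrt hp3.le
  have hp : p = 3 * m ^ 2 := by rw [hm2]; ring
  have hrpow : (p / 3) ^ ((3 : ℝ) / 2) = m ^ 3 := by
    rw [show ((3 : ℝ) / 2) = (1 / 2) * 3 by norm_num,
      Real.rpow_mul hp3.le, ← Real.sqrt_eq_rpow, ← hmdef,
      show ((3 : ℝ) : ℝ) = ((3 : ℕ) : ℝ) by norm_num, Real.rpow_natCast]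
  rw [hrpow] at hq1
  have hq2' : |q2| < 2 * m ^ 3 := by linarith
  obtain ⟨hma1, hmb1, hsq1, hqeq1, habs1⟩ :=
    spread_cubic_aux m p q1 a1 b1 hm hp (by linarith) ha1 hb1 hmax1 hmin1
  obtain ⟨hma2, hmb2, hsq2, hqeq2, habs2⟩ :=
    spread_cubic_aux m p q2 a2 b2 hm hp hq2' ha2 hb2 hmax2 hmin2
  set u1 := a1 + b1 with hu1
  set u2 := a2 + b2 with hu2
  -- |q| = |u| (p - u^2) since |u| ≤ m
  have hple1 : u1 ^ 2 ≤ p := by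
    have h1 : u1 ^ 2 ≤ m ^ 2 := by
      rw [← sq_abs u1]; exact pow_le_pow_left₀ (abs_nonneg u1) habs1 2
    linarith [hm2, hp3]
  have hple2 : u2 ^ 2 ≤ p := by
    have h1 : u2 ^ 2 ≤ m ^ 2 := by
      rw [← sq_abs u2]; exact pow_le_pow_left₀ (abs_nonneg u2) habs2 2
    linarith [hm2, hp3]
  have habsq1 : |q1| = |u1| * (p - u1 ^ 2) := by
    rw [hqeq1, show u1 ^ 3 - p * u1 = -(u1 * (p - u1 ^ 2)) by ring, abs_neg, abs_mul,
      abs_of_nonneg (by linarith : (0:ℝ) ≤ p - u1 ^ 2)]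
  have habsq2 : |q2| = |u2| * (p - u2 ^ 2) := by
    rw [hqeq2, show u2 ^ 3 - p * u2 = -(u2 * (p - u2 ^ 2)) by ring, abs_neg, abs_mul,
      abs_of_nonneg (by linarith : (0:ℝ) ≤ p - u2 ^ 2)]
  -- |u1| > |u2|
  have huu : |u2| < |u1| := by
    by_contra h
    push_neg at h
    set x := |u1| with hx
    set y := |u2| with hy
    have hx0 : 0 ≤ x := abs_nonneg u1
    have hy0 : 0 ≤ y := abs_nonneg u2
    have hxy : x ≤ y := h
    have hxs : x ^ 2 = u1 ^ 2 := sq_abs u1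
    have hys : y ^ 2 = u2 ^ 2 := sq_abs u2
    have hnn : 0 ≤ p - (x ^ 2 + x * y + y ^ 2) := by
      have hx2 : x ^ 2 ≤ m ^ 2 := pow_le_pow_left₀ hx0 habs1 2
      have hy2 : y ^ 2 ≤ m ^ 2 := pow_le_pow_left₀ hy0 habs2 2
      have hxy2 : x * y ≤ m * m := mul_le_mul habs1 habs2 hy0 hm.le
      have hmm : m * m = m ^ 2 := by ring
      linarith [hp]
    have hdiff : y * (p - y ^ 2) - x * (p - x ^ 2) = (y - x) * (p - (x ^ 2 + x * y + y ^ 2)) := by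
      ring
    have hmn : 0 ≤ (y - x) * (p - (x ^ 2 + x * y + y ^ 2)) :=
      mul_nonneg (by linarith) hnn
    have : |q1| ≤ |q2| := by
      rw [habsq1, habsq2, ← hxs, ← hys]
      linarith [hdiff, hmn]
    linarith
  have husq : u2 ^ 2 < u1 ^ 2 := by
    rw [← sq_abs u1, ← sq_abs u2]
    exact pow_lt_pow_left₀ huu (abs_nonneg u2) (by norm_num)
  have hs1 : 0 < a1 - b1 := by linarith
  have hs2 : 0 < a2 - b2 := by linarith
  have h12 : (a1 - b1) ^ 2 < (a2 - b2) ^ 2 := by linarith [hsq1, hsq2, husq]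
  by_contra hcon
  push_neg at hcon
  have := pow_le_pow_left₀ hs2.le hcon 2
  linarith
end

section
/- Let G be the join of two regular graphs: G = G1 ∨ G2, where G1 is k-regular on m vertices and G2 is ℓ-regular on n vertices. Then the characteristic polynomial of the adjacency matrix of G equals ((t-k)(t-ℓ) - m*n) * p_{G1}(t) * p_{G2}(t) / ((t-k)(t-ℓ)), where p_{G1} and p_{G2} are the characteristic polynomials of the adjacency matrices of G1 and G2. -/
open Polynomial
open Matrix

/-- The join of two simple graphs: all edges between the two vertex sets are added. -/
def graphJoin {α β : Type*} (G : SimpleGraph α) (H : SimpleGraph β) :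
    SimpleGraph (α ⊕ β) where
  Adj x y :=
    match x, y with
    | Sum.inl a, Sum.inl b => G.Adj a b
    | Sum.inr a, Sum.inr b => H.Adj a b
    | Sum.inl _, Sum.inr _ => True
    | Sum.inr _, Sum.inl _ => True
  symm := by
    constructor
    rintro (a | a) (b | b) h
    · exact G.adj_symm h
    · trivial
    · trivial
    · exact H.adj_symm h
  loopless := by
    constructor
    rintro (a | a) h
    · exact G.irrefl h
    · exact H.irrefl h

instance graphJoin.decidableRel {α β : Type*} (G : SimpleGraph α) (H : SimpleGraph β)
    [dG : DecidableRel G.Adj] [dH : DecidableRel H.Adj] :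
    DecidableRel (graphJoin G H).Adj := fun x y =>
  match x, y with
  | Sum.inl a, Sum.inl b => dG a b
  | Sum.inr a, Sum.inr b => dH a b
  | Sum.inl _, Sum.inr _ => Decidable.isTrue trivial
  | Sum.inr _, Sum.inl _ => Decidable.isTrue trivial

private lemma eval_charpoly' {ι : Type*} [Fintype ι] [DecidableEq ι] (M : Matrix ι ι ℝ) (t : ℝ) :
    M.charpoly.eval t = (Matrix.diagonal (fun _ => t) - M).det := by
  have h : (charmatrix M).map (Polynomial.evalRingHom t) = Matrix.diagonal (fun _ => t) - M := by
    ext i j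
    by_cases h : i = j <;>
      simp [charmatrix_apply, h, Matrix.diagonal_apply]
  rw [Matrix.charpoly,
    show eval t M.charmatrix.det = (evalRingHom t) M.charmatrix.det from rfl,
    RingHom.map_det, RingHom.mapMatrix_apply, h]

private lemma inv_row_sum {ι : Type*} [Fintype ι] [DecidableEq ι]
    {B : Matrix ι ι ℝ} (hB : IsUnit B.det) {c : ℝ} (hc : c ≠ 0)
    (h : B *ᵥ Function.const ι (1 : ℝ) = c • Function.const ι (1 : ℝ)) (a : ι) :
    ∑ b, B⁻¹ a b = c⁻¹ := by
  have e : B⁻¹ *ᵥ Function.const ι (1 : ℝ) = c⁻¹ • Function.const ι (1 : ℝ) := by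
    have h2 : B⁻¹ *ᵥ (B *ᵥ Function.const ι (1 : ℝ)) = Function.const ι (1 : ℝ) := by
      rw [Matrix.mulVec_mulVec, Matrix.nonsing_inv_mul B hB, Matrix.one_mulVec]
    rw [h, Matrix.mulVec_smul] at h2
    calc B⁻¹ *ᵥ Function.const ι (1 : ℝ)
        = c⁻¹ • (c • (B⁻¹ *ᵥ Function.const ι (1 : ℝ))) := by
          rw [smul_smul, inv_mul_cancel₀ hc, one_smul]
      _ = c⁻¹ • Function.const ι (1 : ℝ) := by rw [h2]
  have := congrFun e a
  simpa [Matrix.mulVec, dotProduct] using this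

private lemma det_sub_const {n : Type*} [Fintype n] [DecidableEq n]
    {B : Matrix n n ℝ} (hB : IsUnit B.det) {s : ℝ}
    (hs : ∀ a, ∑ b, B⁻¹ a b = s) (c : ℝ) :
    (B - Matrix.of (fun (_ _ : n) => c)).det = B.det * (1 - c * Fintype.card n * s) := by
  have h1 : B - Matrix.of (fun (_ _ : n) => c) =
      B + Matrix.replicateCol Unit (fun _ : n => -c) * Matrix.replicateRow Unit (fun _ => (1 : ℝ)) := by
    ext i j
    simp [Matrix.mul_apply, Matrix.replicateCol, Matrix.replicateRow]
    ring
  rw [h1, Matrix.det_add_replicateCol_mul_replicateRow hB,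
    Matrix.det_unique (1 + Matrix.replicateRow Unit (fun _ : n => (1:ℝ)) * B⁻¹ *
      Matrix.replicateCol Unit (fun _ : n => -c))]
  congr 1
  have h2 : ((Matrix.replicateRow Unit (fun _ : n => (1:ℝ)) * B⁻¹ * Matrix.replicateCol Unit (fun _ : n => -c) :
      Matrix Unit Unit ℝ))
      (default : Unit) (default : Unit) = ∑ j : n, (∑ i : n, B⁻¹ i j) * (-c) := by
    simp [Matrix.mul_apply, Matrix.replicateRow, Matrix.replicateCol, Finset.sum_mul]
  rw [Matrix.add_apply, Matrix.one_apply_eq, h2]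
  have h3 : ∑ j : n, (∑ i : n, B⁻¹ i j) * -c = ∑ i : n, (∑ j : n, B⁻¹ i j) * -c := by
    simp only [Finset.sum_mul]
    exact Finset.sum_comm ..

  rw [h3]
  simp only [hs]
  simp [Finset.sum_const, Finset.card_univ]
  ring

section
variable {α β : Type*} [Fintype α] [Fintype β] [DecidableEq α] [DecidableEq β]
  (G1 : SimpleGraph α) (G2 : SimpleGraph β) [DecidableRel G1.Adj] [DecidableRel G2.Adj]

private lemma key_det (k ℓ : ℕ) (h1 : G1.IsRegularOfDegree k) (h2 : G2.IsRegularOfDegree ℓ)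
    (t : ℝ) (htk : t ≠ (k : ℝ)) (htl : t ≠ (ℓ : ℝ))
    (hd1 : (Matrix.diagonal (fun _ : α => t) - G1.adjMatrix ℝ).det ≠ 0)
    (hd2 : (Matrix.diagonal (fun _ : β => t) - G2.adjMatrix ℝ).det ≠ 0) :
    (Matrix.diagonal (fun _ : α ⊕ β => t) - (graphJoin G1 G2).adjMatrix ℝ).det *
        ((t - k) * (t - ℓ)) =
      ((t - k) * (t - ℓ) - (Fintype.card α : ℝ) * (Fintype.card β : ℝ)) *
        (Matrix.diagonal (fun _ : α => t) - G1.adjMatrix ℝ).det *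
        (Matrix.diagonal (fun _ : β => t) - G2.adjMatrix ℝ).det := by
  set B1 := Matrix.diagonal (fun _ : α => t) - G1.adjMatrix ℝ with hB1def
  set B2 := Matrix.diagonal (fun _ : β => t) - G2.adjMatrix ℝ with hB2def
  have hu1 : IsUnit B1.det := isUnit_iff_ne_zero.2 hd1
  have hu2 : IsUnit B2.det := isUnit_iff_ne_zero.2 hd2
  have htk' : t - (k : ℝ) ≠ 0 := sub_ne_zero.2 htk
  have htl' : t - (ℓ : ℝ) ≠ 0 := sub_ne_zero.2 htl
  haveI : Invertible B1 := B1.invertibleOfIsUnitDet hu1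
  -- mulVec facts
  have e1 : B1 *ᵥ Function.const α (1 : ℝ) = (t - k) • Function.const α (1 : ℝ) := by
    funext v
    simp [hB1def, Matrix.sub_mulVec, Matrix.mulVec_diagonal,
      SimpleGraph.adjMatrix_mulVec_const_apply_of_regular h1, h1 v, sub_mul]
  have e2 : B2 *ᵥ Function.const β (1 : ℝ) = (t - ℓ) • Function.const β (1 : ℝ) := by
    funext v
    simp [hB2def, Matrix.sub_mulVec, Matrix.mulVec_diagonal,
      SimpleGraph.adjMatrix_mulVec_const_apply_of_regular h2, h2 v, sub_mul]
  have hs1 : ∀ a, ∑ b, B1⁻¹ a b = (t - k)⁻¹ := inv_row_sum hu1 htk' e1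
  have hs2 : ∀ a, ∑ b, B2⁻¹ a b = (t - ℓ)⁻¹ := inv_row_sum hu2 htl' e2
  -- block decomposition
  have hblock : Matrix.diagonal (fun _ : α ⊕ β => t) - (graphJoin G1 G2).adjMatrix ℝ =
      fromBlocks B1 (Matrix.of fun (_ : α) (_ : β) => (-1 : ℝ))
        (Matrix.of fun (_ : β) (_ : α) => (-1 : ℝ)) B2 := by
    ext (i | i) (j | j) <;>
      simp [hB1def, hB2def, Matrix.diagonal_apply, Matrix.fromBlocks,
        SimpleGraph.adjMatrix_apply] <;> simp [graphJoin]
  rw [hblock, Matrix.det_fromBlocks₁₁, invOf_eq_nonsing_inv]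
  -- the schur complement
  have hprod : (Matrix.of fun (_ : β) (_ : α) => (-1 : ℝ)) * B1⁻¹ *
      (Matrix.of fun (_ : α) (_ : β) => (-1 : ℝ)) =
      Matrix.of (fun (_ _ : β) => (Fintype.card α : ℝ) * (t - k)⁻¹) := by
    ext i j
    simp only [Matrix.mul_apply, Matrix.of_apply, Finset.sum_mul, Finset.mul_sum]
    have : ∀ b : α, ∑ a : α, -1 * B1⁻¹ a b * -1 = ∑ a : α, B1⁻¹ a b := by
      intro b; apply Finset.sum_congr rfl; intros; ring
    rw [Finset.sum_congr rfl fun b _ => this b, Finset.sum_comm]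
    simp [hs1, Finset.sum_const, Finset.card_univ]
  have hdet2 : (B2 - (Matrix.of fun (_ : β) (_ : α) => (-1 : ℝ)) * B1⁻¹ *
      (Matrix.of fun (_ : α) (_ : β) => (-1 : ℝ))).det =
      B2.det * (1 - (Fintype.card α : ℝ) * (t - k)⁻¹ * Fintype.card β * (t - ℓ)⁻¹) := by
    rw [hprod, det_sub_const hu2 hs2]
  rw [hdet2]
  field_simp
end


/-- The characteristic polynomial of the join of a `k`-regular graph on `m` vertices and an
`ℓ`-regular graph on `n` vertices satisfies
`p_{G1 ∨ G2}(t) ((t-k)(t-ℓ)) = ((t-k)(t-ℓ) - m n) p_{G1}(t) p_{G2}(t)`. -/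
theorem charpoly_graphJoin {α β : Type*} [Fintype α] [Fintype β] [DecidableEq α] [DecidableEq β]
    (G1 : SimpleGraph α) (G2 : SimpleGraph β) [DecidableRel G1.Adj] [DecidableRel G2.Adj]
    (k ℓ : ℕ) (h1 : G1.IsRegularOfDegree k) (h2 : G2.IsRegularOfDegree ℓ) :
    ((graphJoin G1 G2).adjMatrix ℝ).charpoly * ((X - C (k : ℝ)) * (X - C (ℓ : ℝ))) =
      ((X - C (k : ℝ)) * (X - C (ℓ : ℝ)) - C ((Fintype.card α : ℝ) * (Fintype.card β : ℝ))) *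
        (G1.adjMatrix ℝ).charpoly * (G2.adjMatrix ℝ).charpoly := by
  apply Polynomial.eq_of_infinite_eval_eq
  have hp1 : (G1.adjMatrix ℝ).charpoly ≠ 0 := (Matrix.charpoly_monic _).ne_zero
  have hp2 : (G2.adjMatrix ℝ).charpoly ≠ 0 := (Matrix.charpoly_monic _).ne_zero
  have hq : ((X - C (k : ℝ)) * (X - C (ℓ : ℝ))) ≠ 0 :=
    ((monic_X_sub_C _).mul (monic_X_sub_C _)).ne_zero
  have hfin : ({t : ℝ | IsRoot (G1.adjMatrix ℝ).charpoly t} ∪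
      {t : ℝ | IsRoot (G2.adjMatrix ℝ).charpoly t} ∪
      {t : ℝ | IsRoot ((X - C (k : ℝ)) * (X - C (ℓ : ℝ))) t}).Finite :=
    ((Polynomial.finite_setOf_isRoot hp1).union
      (Polynomial.finite_setOf_isRoot hp2)).union (Polynomial.finite_setOf_isRoot hq)
  apply Set.Infinite.mono _ hfin.infinite_compl
  intro t ht
  simp only [Set.mem_compl_iff, Set.mem_union, Set.mem_setOf_eq, not_or] at ht
  obtain ⟨⟨hr1, hr2⟩, hrq⟩ := ht
  have hd1 : (Matrix.diagonal (fun _ : α => t) - G1.adjMatrix ℝ).det ≠ 0 := by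
    rw [← eval_charpoly']; exact hr1
  have hd2 : (Matrix.diagonal (fun _ : β => t) - G2.adjMatrix ℝ).det ≠ 0 := by
    rw [← eval_charpoly']; exact hr2
  have hq' : (t - (k : ℝ)) * (t - (ℓ : ℝ)) ≠ 0 := by
    intro h
    exact hrq (by simp [IsRoot, h])
  have htk : t ≠ (k : ℝ) := fun h => hq' (by rw [h]; ring)
  have htl : t ≠ (ℓ : ℝ) := fun h => hq' (by rw [h]; ring)
  simp only [Set.mem_setOf_eq, eval_mul, eval_sub, eval_C, eval_X, eval_charpoly']
  exact key_det G1 G2 k ℓ h1 h2 t htk htl hd1 hd2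
end

section
/- Let G be a graph with n >= 2 vertices, e edges, and vertex degrees d_1, ..., d_n. Then sum_{i=1}^n d_i^2 <= e*(2e/(n-1) + n - 2). -/
open Finset

section deCaenAux

variable {V : Type*} [Fintype V] [DecidableEq V] (G : SimpleGraph V) [DecidableRel G.Adj]

/-- indicator count: neighbors of `i` that are not neighbors of `j` and not equal to `j`. -/
private def deCaenA (i j : V) : ℤ :=
  ∑ k : V, (if G.Adj i k ∧ ¬ G.Adj j k ∧ k ≠ j then (1:ℤ) else 0)

private lemma deCaen_deg_sum (v : V) :
    (∑ k : V, if G.Adj v k then (1:ℤ) else 0) = G.degree v := by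
  simp [SimpleGraph.degree, SimpleGraph.neighborFinset_eq_filter, Finset.sum_boole]

private lemma deCaen_deg_sum' (v : V) :
    (∑ k : V, if G.Adj k v then (1:ℤ) else 0) = G.degree v := by
  rw [← deCaen_deg_sum G v]
  exact Finset.sum_congr rfl fun k _ => if_congr (G.adj_comm k v) rfl rfl

private lemma deCaenA_nonneg (i j : V) : 0 ≤ deCaenA G i j := by
  refine Finset.sum_nonneg fun k _ => ?_
  split <;> norm_num

private lemma deCaenA_diff (i j : V) :
    deCaenA G i j - deCaenA G j i = (G.degree i : ℤ) - (G.degree j : ℤ) := by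
  have h1 : ∀ (i j : V), deCaenA G i j
      = (∑ k : V, if G.Adj i k ∧ ¬ G.Adj j k then (1:ℤ) else 0)
        - (if G.Adj i j then (1:ℤ) else 0) := by
    intro i j
    have hpt : ∀ k : V, (if G.Adj i k ∧ ¬ G.Adj j k then (1:ℤ) else 0)
        = (if G.Adj i k ∧ ¬ G.Adj j k ∧ k ≠ j then (1:ℤ) else 0)
          + (if k = j then (if G.Adj i j then (1:ℤ) else 0) else 0) := by
      intro k
      by_cases hk : k = j
      · subst hk; simp
      · simp [hk]
    have hj : (∑ k : V, if k = j then (if G.Adj i j then (1:ℤ) else 0) else 0)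
        = (if G.Adj i j then (1:ℤ) else 0) := by simp
    rw [eq_sub_iff_add_eq, deCaenA, ← hj, ← Finset.sum_add_distrib]
    exact Finset.sum_congr rfl fun k _ => (hpt k).symm
  rw [h1, h1, ← deCaen_deg_sum G i, ← deCaen_deg_sum G j]
  have hsym : (if G.Adj i j then (1:ℤ) else 0) = (if G.Adj j i then (1:ℤ) else 0) := by
    by_cases h : G.Adj i j
    · simp [h, h.symm]
    · have h' : ¬ G.Adj j i := fun hh => h hh.symm
      simp [h, h']
  rw [hsym]
  have hpt : ∀ k : V, (if G.Adj i k ∧ ¬ G.Adj j k then (1:ℤ) else 0)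
      - (if G.Adj j k ∧ ¬ G.Adj i k then (1:ℤ) else 0)
      = (if G.Adj i k then (1:ℤ) else 0) - (if G.Adj j k then (1:ℤ) else 0) := by
    intro k
    by_cases h1 : G.Adj i k <;> by_cases h2 : G.Adj j k <;> simp [h1, h2]
  have := Finset.sum_congr rfl (fun k (_ : k ∈ Finset.univ) => hpt k)
  rw [Finset.sum_sub_distrib, Finset.sum_sub_distrib] at this
  linarith [this]

private lemma deCaenA_le (i j : V) (hij : i ≠ j) :
    deCaenA G i j ≤ (Fintype.card V : ℤ) - 2 := by
  have hcard : deCaenA G i j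
      = ((Finset.univ.filter (fun k => G.Adj i k ∧ ¬ G.Adj j k ∧ k ≠ j)).card : ℤ) := by
    rw [deCaenA, Finset.sum_boole]
  rw [hcard]
  have hsub : Finset.univ.filter (fun k => G.Adj i k ∧ ¬ G.Adj j k ∧ k ≠ j)
      ⊆ (Finset.univ.erase j).erase i := by
    intro k hk
    simp only [Finset.mem_filter] at hk
    refine Finset.mem_erase.2 ⟨(G.ne_of_adj hk.2.1).symm, Finset.mem_erase.2 ⟨hk.2.2.2, Finset.mem_univ k⟩⟩
  have hle := Finset.card_le_card hsub
  have hc : ((Finset.univ.erase j).erase i).card = Fintype.card V - 2 := by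
    rw [Finset.card_erase_of_mem (Finset.mem_erase.2 ⟨hij, Finset.mem_univ i⟩),
        Finset.card_erase_of_mem (Finset.mem_univ j), Finset.card_univ]
    omega
  have h2 : 2 ≤ Fintype.card V := by
    have : i ∈ (Finset.univ : Finset V) := Finset.mem_univ i
    have hj : j ∈ (Finset.univ : Finset V) := Finset.mem_univ j
    calc 2 = ({i, j} : Finset V).card := by rw [Finset.card_insert_of_notMem (by simp [hij]), Finset.card_singleton]
    _ ≤ Finset.univ.card := Finset.card_le_card (Finset.subset_univ _)
    _ = Fintype.card V := Finset.card_univ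
  have : ((Finset.univ.filter (fun k => G.Adj i k ∧ ¬ G.Adj j k ∧ k ≠ j)).card : ℤ)
      ≤ ((Fintype.card V - 2 : ℕ) : ℤ) := by
    exact_mod_cast hle.trans_eq hc
  rw [Int.ofNat_sub h2] at this
  exact_mod_cast this

private lemma deCaenA_total :
    ∑ i : V, ∑ j : V, deCaenA G i j
      = ∑ k : V, (G.degree k : ℤ) * ((Fintype.card V : ℤ) - 1 - (G.degree k : ℤ)) := by
  have hpt : ∀ i j k : V, (if G.Adj i k ∧ ¬ G.Adj j k ∧ k ≠ j then (1:ℤ) else 0)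
      = (if G.Adj i k then (1:ℤ) else 0) * (if ¬ G.Adj j k ∧ k ≠ j then (1:ℤ) else 0) := by
    intro i j k
    by_cases h1 : G.Adj i k <;> by_cases h2 : ¬ G.Adj j k ∧ k ≠ j <;> simp [h1, h2]
  have hG : ∀ k : V, (∑ j : V, if ¬ G.Adj j k ∧ k ≠ j then (1:ℤ) else 0)
      = (Fintype.card V : ℤ) - 1 - (G.degree k : ℤ) := by
    intro k
    have hpt2 : ∀ j : V, (if ¬ G.Adj j k ∧ k ≠ j then (1:ℤ) else 0)
        = 1 - (if G.Adj j k then (1:ℤ) else 0) - (if k = j then (1:ℤ) else 0) := by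
      intro j
      by_cases h2 : k = j
      · subst h2; simp
      · by_cases h1 : G.Adj j k <;> simp [h1, h2]
    rw [Finset.sum_congr rfl fun j _ => hpt2 j]
    rw [Finset.sum_sub_distrib, Finset.sum_sub_distrib, Finset.sum_const, Finset.card_univ,
      deCaen_deg_sum' G k, Finset.sum_ite_eq Finset.univ k (fun _ => (1:ℤ)),
      if_pos (Finset.mem_univ k)]
    push_cast
    ring
  calc ∑ i : V, ∑ j : V, deCaenA G i j
      = ∑ i : V, ∑ k : V, (if G.Adj i k then (1:ℤ) else 0)
          * ((Fintype.card V : ℤ) - 1 - (G.degree k : ℤ)) := by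
        refine Finset.sum_congr rfl fun i _ => ?_
        simp only [deCaenA]
        rw [Finset.sum_comm (f := fun j k => if G.Adj i k ∧ ¬ G.Adj j k ∧ k ≠ j then (1:ℤ) else 0)]
        refine Finset.sum_congr rfl fun k _ => ?_
        rw [← hG k, Finset.mul_sum]
        exact Finset.sum_congr rfl fun j _ => hpt i j k
    _ = ∑ k : V, (∑ i : V, if G.Adj i k then (1:ℤ) else 0)
          * ((Fintype.card V : ℤ) - 1 - (G.degree k : ℤ)) := by
        rw [Finset.sum_comm]
        exact Finset.sum_congr rfl fun k _ => (Finset.sum_mul _ _ _).symm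
    _ = ∑ k : V, (G.degree k : ℤ) * ((Fintype.card V : ℤ) - 1 - (G.degree k : ℤ)) := by
        exact Finset.sum_congr rfl fun k _ => by rw [deCaen_deg_sum' G k]

end deCaenAux

/-- de Caen's bound: for a graph with `n ≥ 2` vertices and `e` edges,
`∑ dᵢ² ≤ e (2e/(n-1) + n - 2)`. -/
theorem deCaen_bound {V : Type*} [Fintype V] [DecidableEq V]
    (G : SimpleGraph V) [DecidableRel G.Adj] (hn : 2 ≤ Fintype.card V) :
    (∑ v : V, (G.degree v : ℝ) ^ 2) ≤
      (G.edgeFinset.card : ℝ) *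
        (2 * (G.edgeFinset.card : ℝ) / ((Fintype.card V : ℝ) - 1) + (Fintype.card V : ℝ) - 2) := by
  set n : ℤ := (Fintype.card V : ℤ) with hn_def
  have hn2 : (2:ℤ) ≤ n := by rw [hn_def]; exact_mod_cast hn
  set D : V → ℤ := fun v => (G.degree v : ℤ) with hD
  set S : ℤ := ∑ v : V, D v ^ 2 with hS
  set T : ℤ := ∑ v : V, D v with hT
  set e : ℤ := (G.edgeFinset.card : ℤ) with he
  have hTe : T = 2 * e := by
    have h := SimpleGraph.sum_degrees_eq_twice_card_edges G
    rw [hT, he, hD]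
    beta_reduce
    exact_mod_cast h
  -- pointwise pair bound
  have pair : ∀ i j : V, (D i - D j) ^ 2 ≤ (n - 2) * (deCaenA G i j + deCaenA G j i) := by
    intro i j
    by_cases hij : i = j
    · subst hij
      simp only [sub_self, ne_eq]
      have := deCaenA_nonneg G i i
      nlinarith
    · have h1 := deCaenA_diff G i j
      have h2 := deCaenA_le G i j hij
      have h3 := deCaenA_le G j i (Ne.symm hij)
      have h4 := deCaenA_nonneg G i j
      have h5 := deCaenA_nonneg G j i
      have hd : D i - D j = deCaenA G i j - deCaenA G j i := by rw [h1]
      rw [hd]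
      nlinarith [mul_nonneg h4 h5]
  -- sum the pair bound
  have hsum : ∑ i : V, ∑ j : V, (D i - D j) ^ 2
      ≤ (n - 2) * (2 * ∑ k : V, D k * (n - 1 - D k)) := by
    calc ∑ i : V, ∑ j : V, (D i - D j) ^ 2
        ≤ ∑ i : V, ∑ j : V, (n - 2) * (deCaenA G i j + deCaenA G j i) :=
          Finset.sum_le_sum fun i _ => Finset.sum_le_sum fun j _ => pair i j
      _ = (n - 2) * ((∑ i : V, ∑ j : V, deCaenA G i j) + (∑ i : V, ∑ j : V, deCaenA G j i)) := by
          rw [← Finset.sum_add_distrib]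
          rw [Finset.mul_sum]
          refine Finset.sum_congr rfl fun i _ => ?_
          rw [← Finset.sum_add_distrib, Finset.mul_sum]
      _ = (n - 2) * (2 * ∑ k : V, D k * (n - 1 - D k)) := by
          rw [Finset.sum_comm (f := fun i j => deCaenA G j i), deCaenA_total G]
          ring
  -- expand the left double sum
  have hexp : ∑ i : V, ∑ j : V, (D i - D j) ^ 2 = 2 * n * S - 2 * T * T := by
    have h1 : ∀ i : V, ∑ j : V, (D i - D j) ^ 2 = n * D i ^ 2 - 2 * (D i * T) + S := by
      intro i
      have : ∀ j : V, (D i - D j) ^ 2 = D i ^ 2 - 2 * (D i * D j) + D j ^ 2 := fun j => by ring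
      rw [Finset.sum_congr rfl fun j _ => this j]
      rw [Finset.sum_add_distrib, Finset.sum_sub_distrib, Finset.sum_const, Finset.card_univ,
        ← Finset.mul_sum, ← Finset.mul_sum, ← hS, ← hT]
      push_cast [hn_def]
      ring
    rw [Finset.sum_congr rfl fun i _ => h1 i]
    rw [Finset.sum_add_distrib, Finset.sum_sub_distrib, Finset.sum_const, Finset.card_univ,
      ← Finset.mul_sum, ← Finset.mul_sum, ← Finset.sum_mul, ← hS, ← hT]
    push_cast [hn_def]
    ring
  -- key integer inequality
  have hkey : (n - 1) * S ≤ 2 * e ^ 2 + e * (n - 1) * (n - 2) := by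
    have hRHS : ∑ k : V, D k * (n - 1 - D k) = (n - 1) * T - S := by
      have : ∀ k : V, D k * (n - 1 - D k) = (n - 1) * D k - D k ^ 2 := fun k => by ring
      rw [Finset.sum_congr rfl fun k _ => this k, Finset.sum_sub_distrib, ← Finset.mul_sum,
        ← hT, ← hS]
    rw [hexp, hRHS, hTe] at hsum
    nlinarith [hsum]
  -- pass to the reals
  rw [hS, hn_def, he, hD] at hkey
  have hnR : (2:ℝ) ≤ (Fintype.card V : ℝ) := by exact_mod_cast hn
  have hpos : (0:ℝ) < (Fintype.card V : ℝ) - 1 := by linarith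
  have hkeyR : ((Fintype.card V : ℝ) - 1) * (∑ v : V, (G.degree v : ℝ) ^ 2)
      ≤ 2 * (G.edgeFinset.card : ℝ) ^ 2
        + (G.edgeFinset.card : ℝ) * ((Fintype.card V : ℝ) - 1) * ((Fintype.card V : ℝ) - 2) := by
    have h := (@Int.cast_le ℝ _).2 hkey
    push_cast at h
    convert h using 2
  have h2 : (G.edgeFinset.card : ℝ) *
      (2 * (G.edgeFinset.card : ℝ) / ((Fintype.card V : ℝ) - 1) + (Fintype.card V : ℝ) - 2)
      = (2 * (G.edgeFinset.card : ℝ) ^ 2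
        + (G.edgeFinset.card : ℝ) * ((Fintype.card V : ℝ) - 1) * ((Fintype.card V : ℝ) - 2))
        / ((Fintype.card V : ℝ) - 1) := by
    field_simp
    ring
  rw [h2, le_div_iff₀ hpos]
  nlinarith [hkeyR]
end

section
/- Let G be a graph with n vertices and e edges, maximum degree d_max and minimum degree d_min. Then sum over all vertices v of deg(v)^2 is at most 2e*(d_max + d_min) - n*d_max*d_min. -/
/-- Das's bound: for a graph with `n` vertices, `e` edges, maximum degree `Δ` and minimum
degree `δ`, `∑ deg(v)² ≤ 2e(Δ + δ) - n Δ δ`. -/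
theorem das_bound {V : Type*} [Fintype V] [DecidableEq V]
    (G : SimpleGraph V) [DecidableRel G.Adj] :
    (∑ v : V, (G.degree v : ℝ) ^ 2) ≤
      2 * (G.edgeFinset.card : ℝ) * ((G.maxDegree : ℝ) + (G.minDegree : ℝ)) -
        (Fintype.card V : ℝ) * (G.maxDegree : ℝ) * (G.minDegree : ℝ) := by
  have hsum : (∑ v : V, (G.degree v : ℝ)) = 2 * (G.edgeFinset.card : ℝ) := by
    have := G.sum_degrees_eq_twice_card_edges
    exact_mod_cast this
  have key : ∀ v : V, (G.degree v : ℝ) ^ 2 ≤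
      (G.degree v : ℝ) * ((G.maxDegree : ℝ) + (G.minDegree : ℝ))
        - (G.maxDegree : ℝ) * (G.minDegree : ℝ) := by
    intro v
    have h1 : (G.degree v : ℝ) ≤ (G.maxDegree : ℝ) := by
      exact_mod_cast G.degree_le_maxDegree v
    have h2 : (G.minDegree : ℝ) ≤ (G.degree v : ℝ) := by
      exact_mod_cast G.minDegree_le_degree v
    nlinarith [mul_nonneg (sub_nonneg.2 h1) (sub_nonneg.2 h2)]
  calc (∑ v : V, (G.degree v : ℝ) ^ 2)
      ≤ ∑ v : V, ((G.degree v : ℝ) * ((G.maxDegree : ℝ) + (G.minDegree : ℝ))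
        - (G.maxDegree : ℝ) * (G.minDegree : ℝ)) := Finset.sum_le_sum fun v _ => key v
    _ = _ := by
        rw [Finset.sum_sub_distrib, ← Finset.sum_mul, hsum, Finset.sum_const,
          Finset.card_univ, nsmul_eq_mul]
        ring
end

section
/- Let s >= 6 and t be integers with t >= s and t >= (3/2)*(s-3) + 1. Then for every graph L on s-1 vertices with at least one edge, psi(L) := 3*sum_{v} d_L(v)^2 - (2/(s-1))*(sum_v d_L(v))^2 - (t-1)*sum_v d_L(v) < 0. -/
open Finset

section Aux

variable {V : Type*} [Fintype V] [DecidableEq V]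

private lemma card_pair_filter_adj (G : SimpleGraph V) [DecidableRel G.Adj] :
    (univ.filter fun p : V × V => G.Adj p.1 p.2).card = ∑ v, G.degree v := by
  rw [Finset.card_eq_sum_card_fiberwise (f := Prod.fst) (t := univ) (fun x _ => mem_univ _)]
  refine Finset.sum_congr rfl fun v _ => ?_
  have : ((univ.filter fun p : V × V => G.Adj p.1 p.2).filter fun p => p.1 = v)
      = {v} ×ˢ G.neighborFinset v := by
    ext p
    simp only [mem_filter, mem_univ, true_and, mem_product, mem_singleton,
      SimpleGraph.mem_neighborFinset]
    constructor
    · rintro ⟨h1, h2⟩; subst h2; exact ⟨rfl, h1⟩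
    · rintro ⟨h1, h2⟩; subst h1; exact ⟨h2, rfl⟩
  rw [this, Finset.card_product, Finset.card_singleton, one_mul, SimpleGraph.degree]

private lemma card_nonadj_filter (G : SimpleGraph V) [DecidableRel G.Adj] (v : V) :
    (univ.filter fun w => ¬ G.Adj v w ∧ v ≠ w).card = Fintype.card V - 1 - G.degree v := by
  have : (univ.filter fun w => ¬ G.Adj v w ∧ v ≠ w)
      = univ \ insert v (G.neighborFinset v) := by
    ext w
    simp only [mem_filter, mem_univ, true_and, mem_sdiff, mem_insert,
      SimpleGraph.mem_neighborFinset]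
    constructor
    · rintro ⟨h1, h2⟩ h3; rcases h3 with h3 | h3
      · exact h2 h3.symm
      · exact h1 h3
    · intro h; push_neg at h; exact ⟨h.2, fun hv => h.1 hv.symm⟩
  rw [this, Finset.card_sdiff_of_subset (Finset.subset_univ _), Finset.card_univ,
    Finset.card_insert_of_notMem (G.notMem_neighborFinset_self v), SimpleGraph.degree]
  omega

private lemma card_pair_filter_nonadj (G : SimpleGraph V) [DecidableRel G.Adj] :
    (univ.filter fun p : V × V => ¬ G.Adj p.1 p.2 ∧ p.1 ≠ p.2).card
      = ∑ v, (Fintype.card V - 1 - G.degree v) := by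
  rw [Finset.card_eq_sum_card_fiberwise (f := Prod.fst) (t := univ) (fun x _ => mem_univ _)]
  refine Finset.sum_congr rfl fun v _ => ?_
  rw [← card_nonadj_filter G v]
  refine Finset.card_bij' (fun p _ => p.2) (fun w _ => (v, w)) ?_ ?_ ?_ ?_
  · rintro ⟨a, b⟩ hp
    simp only [mem_filter, mem_univ, true_and] at hp ⊢
    obtain ⟨⟨h1, h2⟩, h3⟩ := hp
    subst h3; exact ⟨h1, h2⟩
  · intro w hw
    simp only [mem_filter, mem_univ, true_and] at hw ⊢
    exact ⟨⟨hw.1, hw.2⟩, trivial⟩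
  · rintro ⟨a, b⟩ hp
    simp only [mem_filter] at hp
    simp [hp.2.symm]
  · intro w hw; rfl

private lemma card_triple_filter (G : SimpleGraph V) [DecidableRel G.Adj] :
    (univ.filter fun r : V × V × V =>
        G.Adj r.1 r.2.1 ∧ ¬ G.Adj r.2.1 r.2.2 ∧ r.2.1 ≠ r.2.2).card
      = ∑ w, G.degree w * (Fintype.card V - 1 - G.degree w) := by
  rw [Finset.card_eq_sum_card_fiberwise (f := fun r => r.2.1) (t := univ)
    (fun x _ => mem_univ _)]
  refine Finset.sum_congr rfl fun w _ => ?_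
  have hdeg : G.degree w = (univ.filter fun a => G.Adj a w).card := by
    rw [SimpleGraph.degree, SimpleGraph.neighborFinset_eq_filter]
    congr 1; ext a; simp [G.adj_comm]
  rw [← card_nonadj_filter G w, hdeg, ← Finset.card_product]
  refine Finset.card_bij' (fun r _ => (r.1, r.2.2)) (fun p _ => (p.1, w, p.2)) ?_ ?_ ?_ ?_
  · rintro ⟨a, b, c⟩ hr
    simp only [mem_filter, mem_univ, true_and, mem_product] at hr ⊢
    obtain ⟨⟨h1, h2, h3⟩, h4⟩ := hr
    dsimp at h4 ⊢
    subst h4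
    exact ⟨h1, h2, h3⟩
  · rintro ⟨a, c⟩ hp
    simp only [mem_product, mem_filter, mem_univ, true_and] at hp ⊢
    exact ⟨⟨hp.1, hp.2.1, hp.2.2⟩, trivial⟩
  · rintro ⟨a, b, c⟩ hr
    simp only [mem_filter, mem_univ, true_and] at hr
    dsimp
    rw [hr.2]
  · rintro ⟨a, c⟩ hp; rfl

end Aux

section Count

variable {V : Type*} [Fintype V] [DecidableEq V]

private lemma card_quad_le {α : Type*} [DecidableEq α] (a b c d : α) :
    ({a, b, c, d} : Finset α).card ≤ 4 := by
  have h1 := Finset.card_insert_le a ({b, c, d} : Finset α)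
  have h2 := Finset.card_insert_le b ({c, d} : Finset α)
  have h3 := Finset.card_insert_le c ({d} : Finset α)
  have h4 : ({d} : Finset α).card = 1 := Finset.card_singleton d
  omega

private def sharedMap : (V × V) × V × V → V × V × V := fun q =>
  if q.1.1 = q.2.1 then (q.1.2, q.1.1, q.2.2)
  else if q.1.1 = q.2.2 then (q.1.2, q.1.1, q.2.1)
  else if q.1.2 = q.2.1 then (q.1.1, q.1.2, q.2.2)
  else (q.1.1, q.1.2, q.2.1)

private def disMap (G : SimpleGraph V) [DecidableRel G.Adj] : (V × V) × V × V → V × V × V :=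
  fun q => if G.Adj q.1.1 q.2.1 then (q.1.1, q.2.1, q.2.2) else (q.1.2, q.1.1, q.2.1)

private lemma deCaen_nat (G : SimpleGraph V) [DecidableRel G.Adj] (hn : 5 ≤ Fintype.card V) :
    (∑ v, G.degree v) * (∑ v, (Fintype.card V - 1 - G.degree v))
      ≤ (2 * Fintype.card V - 2) * ∑ w, G.degree w * (Fintype.card V - 1 - G.degree w) := by
  classical
  set n := Fintype.card V with hndef
  set A : Finset (V × V) := univ.filter fun p => G.Adj p.1 p.2 with hA
  set B : Finset (V × V) := univ.filter fun p => ¬ G.Adj p.1 p.2 ∧ p.1 ≠ p.2 with hB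
  set I : Finset (V × V × V) := univ.filter fun r =>
    G.Adj r.1 r.2.1 ∧ ¬ G.Adj r.2.1 r.2.2 ∧ r.2.1 ≠ r.2.2 with hI
  set P : Finset ((V × V) × V × V) := A ×ˢ B with hP
  set good : (V × V) × V × V → Prop := fun q =>
    q.1.1 ≠ q.2.1 ∧ q.1.1 ≠ q.2.2 ∧ q.1.2 ≠ q.2.1 ∧ q.1.2 ≠ q.2.2 with hgood
  have hsplit : (P.filter good).card + (P.filter fun q => ¬ good q).card = P.card :=
    Finset.card_filter_add_card_filter_not _
  -- facts about membership
  have memP : ∀ q ∈ P, G.Adj q.1.1 q.1.2 ∧ ¬ G.Adj q.2.1 q.2.2 ∧ q.2.1 ≠ q.2.2 := by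
    intro q hq
    rw [hP, Finset.mem_product] at hq
    rw [hA, Finset.mem_filter] at hq
    rw [hB, Finset.mem_filter] at hq
    exact ⟨hq.1.2, hq.2.2.1, hq.2.2.2⟩
  have memI : ∀ r : V × V × V, r ∈ I ↔
      G.Adj r.1 r.2.1 ∧ ¬ G.Adj r.2.1 r.2.2 ∧ r.2.1 ≠ r.2.2 := by
    intro r; rw [hI, Finset.mem_filter]; simp
  -- shared bound
  have hSh : (P.filter fun q => ¬ good q).card ≤ 4 * I.card := by
    apply Finset.card_le_mul_card_image_of_maps_to (f := sharedMap)
    · rintro ⟨⟨u, v⟩, x, y⟩ hq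
      have hq1 := memP _ (Finset.mem_filter.1 hq).1
      have hbad := (Finset.mem_filter.1 hq).2
      rw [hgood] at hbad
      push_neg at hbad
      obtain ⟨hadj, hnadj, hxy⟩ := hq1
      dsimp at hadj hnadj hxy
      rw [memI]
      unfold sharedMap
      dsimp only
      split_ifs with h1 h2 h3
      · exact ⟨G.adj_symm hadj, by rw [h1]; exact hnadj, by rw [h1]; exact hxy⟩
      · refine ⟨G.adj_symm hadj, ?_, h1⟩
        rw [h2]; exact fun h => hnadj (G.adj_symm h)
      · exact ⟨hadj, by rw [h3]; exact hnadj, by rw [h3]; exact hxy⟩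
      · have h4 : v = y := by tauto
        refine ⟨hadj, ?_, h3⟩
        rw [h4]; exact fun h => hnadj (G.adj_symm h)
    · rintro ⟨a, w, c⟩ hb
      refine le_trans (Finset.card_le_card ?_) (card_quad_le ((w,a),(w,c)) ((w,a),(c,w)) ((a,w),(w,c)) ((a,w),(c,w)))
      rintro ⟨⟨u, v⟩, x, y⟩ hq
      have heq := (Finset.mem_filter.1 hq).2
      unfold sharedMap at heq
      dsimp only at heq
      split_ifs at heq with h1 h2 h3 <;>
        simp only [Prod.mk.injEq] at heq <;>
        obtain ⟨e1, e2, e3⟩ := heq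
      · subst e1; subst e2; subst e3; subst h1; simp
      · subst e1; subst e2; subst e3; subst h2; simp
      · subst e1; subst e2; subst e3; subst h3; simp
      · have h4 : v = y := by
          have hbad := (Finset.mem_filter.1 (Finset.mem_filter.1 hq).1).2
          rw [hgood] at hbad; push_neg at hbad; dsimp at hbad; tauto
        subst e1; subst e2; subst e3; subst h4; simp
  -- disjoint bound
  have hDis : (P.filter good).card ≤ (2 * n - 6) * I.card := by
    apply Finset.card_le_mul_card_image_of_maps_to (f := disMap G)
    · rintro ⟨⟨u, v⟩, x, y⟩ hq
      have hq1 := memP _ (Finset.mem_filter.1 hq).1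
      have hg := (Finset.mem_filter.1 hq).2
      rw [hgood] at hg
      obtain ⟨hadj, hnadj, hxy⟩ := hq1
      obtain ⟨g1, g2, g3, g4⟩ := hg
      dsimp at hadj hnadj hxy g1 g2 g3 g4
      rw [memI]
      unfold disMap
      dsimp only
      split_ifs with h1
      · exact ⟨h1, hnadj, hxy⟩
      · exact ⟨G.adj_symm hadj, h1, g1⟩
    · rintro ⟨a, w, c⟩ hb
      rw [memI] at hb
      obtain ⟨hadj, hnadj, hwc⟩ := hb
      dsimp at hadj hnadj hwc
      have haw : a ≠ w := hadj.ne
      have hac : a ≠ c := fun h => hnadj (h ▸ G.adj_symm hadj)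
      have hcard3 : ({a, w, c} : Finset V).card = 3 := by
        rw [Finset.card_insert_of_notMem (by simp [haw, hac]),
          Finset.card_insert_of_notMem (by simp [hwc]), Finset.card_singleton]
      have hsub : ((P.filter good).filter fun q => disMap G q = (a, w, c)) ⊆
          ((univ \ {a, w, c}).image fun z => ((a, z), (w, c))) ∪
            ((univ \ {a, w, c}).image fun z => ((w, a), (c, z))) := by
        rintro ⟨⟨u, v⟩, x, y⟩ hq
        have hq1 := memP _ (Finset.mem_filter.1 (Finset.mem_filter.1 hq).1).1
        have hg := (Finset.mem_filter.1 (Finset.mem_filter.1 hq).1).2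
        rw [hgood] at hg
        obtain ⟨huv, hnxy, hxy⟩ := hq1
        obtain ⟨g1, g2, g3, g4⟩ := hg
        dsimp at huv hnxy hxy g1 g2 g3 g4
        have heq := (Finset.mem_filter.1 hq).2
        unfold disMap at heq
        dsimp only at heq
        split_ifs at heq with h1 <;> simp only [Prod.mk.injEq] at heq <;>
          obtain ⟨e1, e2, e3⟩ := heq
        · subst e1; subst e2; subst e3
          apply Finset.mem_union_left
          refine Finset.mem_image.2 ⟨v, ?_, rfl⟩
          simp only [Finset.mem_sdiff, Finset.mem_univ, true_and, Finset.mem_insert,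
            Finset.mem_singleton]
          push_neg
          exact ⟨fun h => (G.ne_of_adj huv) h.symm, g3, g4⟩
        · subst e1; subst e2; subst e3
          apply Finset.mem_union_right
          refine Finset.mem_image.2 ⟨y, ?_, rfl⟩
          simp only [Finset.mem_sdiff, Finset.mem_univ, true_and, Finset.mem_insert,
            Finset.mem_singleton]
          push_neg
          exact ⟨fun h => g4 h.symm, fun h => g2 h.symm, fun h => hxy h.symm⟩
      refine le_trans (Finset.card_le_card hsub) ?_
      refine le_trans (Finset.card_union_le _ _) ?_
      have him1 := Finset.card_image_le (s := univ \ ({a, w, c} : Finset V))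
        (f := fun z => ((a, z), (w, c)))
      have him2 := Finset.card_image_le (s := univ \ ({a, w, c} : Finset V))
        (f := fun z => ((w, a), (c, z)))
      have hsd : (univ \ ({a, w, c} : Finset V)).card = n - 3 := by
        rw [Finset.card_sdiff_of_subset (Finset.subset_univ _), Finset.card_univ, hcard3]
      omega
  -- assemble
  have hPcard : P.card = A.card * B.card := Finset.card_product A B
  have htotal : A.card * B.card ≤ (2 * n - 2) * I.card := by
    have : (2 * n - 6) * I.card + 4 * I.card = (2 * n - 2) * I.card := by
      rw [← Nat.add_mul]; congr 1; omega
    omega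
  have e1 : A.card = ∑ v, G.degree v := by rw [hA]; exact card_pair_filter_adj G
  have e2 : B.card = ∑ v, (n - 1 - G.degree v) := by
    rw [hB]; exact card_pair_filter_nonadj G
  have e3 : I.card = ∑ w, G.degree w * (n - 1 - G.degree w) := by
    rw [hI]; exact card_triple_filter G
  rw [e1, e2, e3] at htotal
  exact htotal

end Count

set_option maxHeartbeats 1000000 in
/-- For integers `t ≥ s ≥ 6` with `t ≥ (3/2)(s-3) + 1`, every graph `L` on `s-1` vertices
with at least one edge satisfies `ψ(L) < 0`, where
`ψ(L) = 3 ∑ d(v)² - (2/(s-1)) (∑ d(v))² - (t-1) ∑ d(v)`. -/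
theorem psi_neg_of_large_t {V : Type*} [Fintype V] [DecidableEq V]
    (s t : ℕ) (hs : 6 ≤ s) (hst : s ≤ t) (ht : (3 / 2 : ℝ) * ((s : ℝ) - 3) + 1 ≤ (t : ℝ))
    (L : SimpleGraph V) [DecidableRel L.Adj]
    (hcard : Fintype.card V = s - 1) (hedge : L.edgeFinset.Nonempty) :
    3 * ∑ v, (L.degree v : ℝ) ^ 2 -
      (2 / ((s : ℝ) - 1)) * (∑ v, (L.degree v : ℝ)) ^ 2 -
      ((t : ℝ) - 1) * ∑ v, (L.degree v : ℝ) < 0 := by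
  have hn5 : 5 ≤ Fintype.card V := by omega
  have hkey := deCaen_nat L hn5
  set Sr := ∑ v, (L.degree v : ℝ) ^ 2 with hSrdef
  set Dr := ∑ v, (L.degree v : ℝ) with hDrdef
  set nr := (Fintype.card V : ℝ) with hnrdef
  have h1n : 1 ≤ Fintype.card V := by omega
  have hdle : ∀ v : V, L.degree v ≤ Fintype.card V - 1 := fun v =>
    Nat.le_sub_one_of_lt (L.degree_lt_card_verts v)
  -- cast the counting inequality to ℝ
  have c1 : ((∑ v, L.degree v : ℕ) : ℝ) = Dr := by rw [hDrdef]; push_cast; rfl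
  have csub : ∀ v : V, ((Fintype.card V - 1 - L.degree v : ℕ) : ℝ)
      = nr - 1 - (L.degree v : ℝ) := by
    intro v
    rw [Nat.cast_sub (hdle v), Nat.cast_sub h1n, hnrdef]
    push_cast
    ring
  have c2 : ((∑ v, (Fintype.card V - 1 - L.degree v) : ℕ) : ℝ)
      = nr * (nr - 1) - Dr := by
    rw [Nat.cast_sum]
    rw [Finset.sum_congr rfl fun v _ => csub v]
    rw [Finset.sum_sub_distrib, Finset.sum_const, Finset.card_univ, nsmul_eq_mul, hDrdef,
      hnrdef]
  have c3 : ((∑ w, L.degree w * (Fintype.card V - 1 - L.degree w) : ℕ) : ℝ)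
      = (nr - 1) * Dr - Sr := by
    rw [Nat.cast_sum]
    have : ∀ w : V, ((L.degree w * (Fintype.card V - 1 - L.degree w) : ℕ) : ℝ)
        = (nr - 1) * (L.degree w : ℝ) - (L.degree w : ℝ) ^ 2 := by
      intro w
      rw [Nat.cast_mul, csub w]
      ring
    rw [Finset.sum_congr rfl fun w _ => this w]
    rw [Finset.sum_sub_distrib, ← Finset.mul_sum, hDrdef, hSrdef]
  have c4 : ((2 * Fintype.card V - 2 : ℕ) : ℝ) = 2 * nr - 2 := by
    rw [Nat.cast_sub (by omega), hnrdef]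
    push_cast
    ring
  have hq : Dr * (nr * (nr - 1) - Dr) ≤ (2 * nr - 2) * ((nr - 1) * Dr - Sr) := by
    have := hkey
    have hcast : (((∑ v, L.degree v) * (∑ v, (Fintype.card V - 1 - L.degree v)) : ℕ) : ℝ)
        ≤ (((2 * Fintype.card V - 2) * ∑ w, L.degree w * (Fintype.card V - 1 - L.degree w) : ℕ) : ℝ) :=
      Nat.cast_le.2 this
    rw [Nat.cast_mul, Nat.cast_mul, c1, c2, c3, c4] at hcast
    exact hcast
  -- D ≥ 2
  have hD2 : (2 : ℝ) ≤ Dr := by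
    have h := L.sum_degrees_eq_twice_card_edges
    have hcpos : 1 ≤ L.edgeFinset.card := hedge.card_pos
    have : (2 : ℕ) ≤ ∑ v, L.degree v := by omega
    calc (2:ℝ) = ((2:ℕ):ℝ) := by norm_num
    _ ≤ ((∑ v, L.degree v : ℕ) : ℝ) := Nat.cast_le.2 this
    _ = Dr := c1
  have hnrs : nr = (s : ℝ) - 1 := by
    rw [hnrdef, hcard, Nat.cast_sub (by omega)]
    norm_num
  have hnr5 : (5 : ℝ) ≤ nr := by
    rw [hnrdef]
    exact_mod_cast hn5
  have hnr0 : (0 : ℝ) < nr := by linarith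
  have htT : (3 / 2 : ℝ) * (nr - 2) ≤ (t : ℝ) - 1 := by
    rw [hnrs]
    linarith
  clear_value Sr Dr nr
  clear hkey c1 c2 c3 c4 csub hdle hedge
  rw [← hnrs]
  -- main polynomial inequality
  have key : 3 * Sr * nr - 2 * Dr ^ 2 - ((t : ℝ) - 1) * Dr * nr < 0 := by
    have hS2 : 2 * (nr - 1) * Sr ≤ (nr - 1) * (nr - 2) * Dr + Dr ^ 2 := by nlinarith [hq]
    have hb1 := mul_le_mul_of_nonneg_left hS2 (show (0:ℝ) ≤ 3 * nr by linarith)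
    have haux2 : (0 : ℝ) ≤ 2 * nr * (nr - 1) * Dr :=
      mul_nonneg (mul_nonneg (by linarith) (by linarith)) (by linarith)
    have hb2 := mul_nonneg (sub_nonneg.2 htT) haux2
    have hDsq : (4 : ℝ) ≤ Dr ^ 2 := by nlinarith [hD2, sq_nonneg (Dr - 2)]
    have hprod : (0 : ℝ) ≤ (nr - 5) * (Dr ^ 2 - 4) :=
      mul_nonneg (by linarith) (by linarith)
    have key2 : (2 * nr - 2) * (3 * Sr * nr - 2 * Dr ^ 2 - ((t : ℝ) - 1) * Dr * nr) ≤ -4 := by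
      nlinarith [hb1, hb2, hprod, hDsq]
    by_contra hcon
    push_neg at hcon
    have h0 : (0 : ℝ) ≤ (2 * nr - 2) * (3 * Sr * nr - 2 * Dr ^ 2 - ((t : ℝ) - 1) * Dr * nr) :=
      mul_nonneg (by linarith) hcon
    linarith
  have hfrac : 3 * Sr - 2 / nr * Dr ^ 2 - ((t : ℝ) - 1) * Dr
      = (3 * Sr * nr - 2 * Dr ^ 2 - ((t : ℝ) - 1) * Dr * nr) / nr := by
    field_simp
  rw [hfrac]
  exact div_neg_of_neg_of_pos key hnr0
end

section
/- Let G be a graph in which some vertex set L of size s-1 is completely joined to the remaining vertex set R (every vertex of L is adjacent to every vertex of R). If G has no K_{s,t} minor, then every vertex of the induced subgraph G[R] has degree at most t-1 in G[R]. -/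
/-- `G.HasMinor H`: `H` is a minor of `G`, witnessed by disjoint nonempty connected branch
sets in `G`, one for each vertex of `H`, with an edge of `G` between the branch sets of any
two adjacent vertices of `H`. -/
def SimpleGraph.HasMinor {V W : Type*} (G : SimpleGraph V) (H : SimpleGraph W) : Prop :=
  ∃ f : W → Set V,
    (∀ w, (f w).Nonempty) ∧
    (∀ w, ((G.induce (f w)).Connected)) ∧
    (Pairwise fun w₁ w₂ => Disjoint (f w₁) (f w₂)) ∧
    (∀ w₁ w₂, H.Adj w₁ w₂ → ∃ v₁ ∈ f w₁, ∃ v₂ ∈ f w₂, G.Adj v₁ v₂)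

lemma induce_singleton_connected {V : Type*} (G : SimpleGraph V) (x : V) :
    (G.induce ({x} : Set V)).Connected := by
  haveI : Nonempty ({x} : Set V) := ⟨⟨x, rfl⟩⟩
  constructor
  · intro u w
    have hu : (u : V) = x := u.2
    have hw : (w : V) = x := w.2
    have : u = w := Subtype.ext (hu.trans hw.symm)
    exact this ▸ SimpleGraph.Reachable.refl u

/-- If a set `L` of `s-1` vertices of a `K_{s,t}`-minor-free graph `G` is completely joined to
the rest of the graph, then every vertex outside `L` has at most `t-1` neighbors outside
`L`; i.e. the induced subgraph `G[R]` has maximum degree at most `t-1`. -/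
theorem degree_bound_of_no_Kst_minor {V : Type*} [Fintype V] [DecidableEq V]
    (G : SimpleGraph V) [DecidableRel G.Adj]
    (s t : ℕ) (hs : 1 ≤ s) (hst : s ≤ t)
    (L : Finset V) (hL : L.card = s - 1)
    (hjoin : ∀ u ∈ L, ∀ v, v ∉ L → G.Adj u v)
    (hminor : ¬ G.HasMinor (completeBipartiteGraph (Fin s) (Fin t))) :
    ∀ v, v ∉ L → ((G.neighborFinset v).filter (fun u => u ∉ L)).card ≤ t - 1 := by
  intro v hv
  by_contra hcard
  push_neg at hcard
  have ht1 : 1 ≤ t := hs.trans hst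
  have hcard' : t ≤ ((G.neighborFinset v).filter (fun u => u ∉ L)).card := by omega
  obtain ⟨T, hTsub, hTcard⟩ := Finset.exists_subset_card_eq hcard'
  -- left side: insert v L
  have hIcard : (insert v L).card = s := by
    rw [Finset.card_insert_of_notMem hv, hL]; omega
  set A : Finset V := insert v L with hA
  have eA : Fin s ≃ {x // x ∈ A} := (A.equivFin.trans (finCongr hIcard)).symm
  have eT : Fin t ≃ {x // x ∈ T} := (T.equivFin.trans (finCongr hTcard)).symm
  let a : Fin s → V := fun i => (eA i : V)
  let b : Fin t → V := fun j => (eT j : V)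
  have ha : ∀ i, a i ∈ A := fun i => (eA i).2
  have hb : ∀ j, b j ∈ T := fun j => (eT j).2
  have hbprop : ∀ j, G.Adj v (b j) ∧ b j ∉ L := by
    intro j
    have := hTsub (hb j)
    simp only [Finset.mem_filter, SimpleGraph.mem_neighborFinset] at this
    exact this
  have hainj : Function.Injective a := fun i j h =>
    eA.injective (Subtype.ext h)
  have hbinj : Function.Injective b := fun i j h =>
    eT.injective (Subtype.ext h)
  have hab : ∀ i j, a i ≠ b j := by
    intro i j h
    obtain ⟨hadj, hnL⟩ := hbprop j
    have := ha i
    rw [hA, Finset.mem_insert] at this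
    rcases this with h' | h'
    · have hvb : v = b j := h'.symm.trans h
      exact G.irrefl (hvb ▸ hadj)
    · exact hnL (h ▸ h')
  apply hminor
  refine ⟨fun w => Sum.elim (fun i => {a i}) (fun j => {b j}) w, ?_, ?_, ?_, ?_⟩
  · rintro (i | j) <;> exact ⟨_, rfl⟩
  · rintro (i | j) <;> exact induce_singleton_connected G _
  · rintro (i | j) (i' | j') hne <;>
      simp only [Sum.elim_inl, Sum.elim_inr, Set.disjoint_singleton] <;>
      intro h
    · exact hne (congrArg Sum.inl (hainj h))
    · exact hab i j' h
    · exact hab i' j h.symm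
    · exact hne (congrArg Sum.inr (hbinj h))
  · rintro (i | j) (i' | j') hadj <;>
      simp only [completeBipartiteGraph_adj] at hadj <;> try tauto
    · refine ⟨a i, rfl, b j', rfl, ?_⟩
      have := ha i
      rw [hA, Finset.mem_insert] at this
      rcases this with h' | h'
      · exact h' ▸ (hbprop j').1
      · exact hjoin _ h' _ (hbprop j').2
    · refine ⟨b j, rfl, a i', rfl, ?_⟩
      have := ha i'
      rw [hA, Finset.mem_insert] at this
      rcases this with h' | h'
      · exact (h' ▸ (hbprop j).1).symm
      · exact (hjoin _ h' _ (hbprop j).2).symm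
end

section
/- Let A be a real symmetric n x n matrix with an eigenvalue lambda satisfying |lambda| > spectral radius of a principal submatrix A_R, where A is partitioned into blocks with index sets L and R such that the L-R block is the all-ones matrix J and the R-L block is J transpose: A = [[A_L, J],[J^T, A_R]]. If alpha = (alpha_L, alpha_R) is an eigenvector of A with eigenvalue lambda, then alpha_R = (1^T alpha_L) * sum_{k=0}^infty lambda^{-(k+1)} A_R^k 1, where 1 is the all-ones vector. -/
/-!
The last block row of the eigen-equation reads `(λ - A_R) α_R = (1ᵀ α_L) 1`, and `λ` is not in the
spectrum of `A_R`, so `α_R = (1ᵀ α_L) (λ - A_R)⁻¹ 1`. Diagonalising the symmetric `A_R` by a unitary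
matrix turns the Neumann series `∑ λ^{-(k+1)} A_R^k` into geometric series in `μ / λ` for the
eigenvalues `μ` of `A_R`, which converge; a telescoping argument identifies its sum with
`(λ - A_R)⁻¹`.
-/

open Matrix

theorem HasSum.smul_one_sub_mul_eq_one {𝕜 R : Type*} [Field 𝕜] [Ring R] [Algebra 𝕜 R]
    [TopologicalSpace R] [IsTopologicalRing R] [ContinuousConstSMul 𝕜 R] [T2Space R]
    {lam : 𝕜} (hlam : lam ≠ 0) {a s : R}
    (h : HasSum (fun k : ℕ => (lam ^ (k + 1))⁻¹ • a ^ k) s) : (lam • 1 - a) * s = 1 := by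
  have hshift : HasSum (fun k : ℕ => lam • ((lam ^ (k + 1 + 1))⁻¹ • a ^ (k + 1)))
      (lam • s - 1) := by
    simpa [smul_sub, smul_smul, hlam] using ((hasSum_nat_add_iff' 1).2 h).const_smul lam
  have hmul : a * s = lam • s - 1 := by
    refine (h.mul_left a).unique (hshift.congr_fun fun k => ?_)
    rw [mul_smul_comm, ← pow_succ', smul_smul, pow_succ' _ (k + 1), mul_inv,
      mul_inv_cancel_left₀ hlam]
  rw [sub_mul, smul_one_mul, hmul, sub_sub_cancel]

theorem HasSum.matrix_mulVec_const {ι m n R : Type*} [Fintype n] [NonUnitalNonAssocSemiring R]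
    [TopologicalSpace R] [IsTopologicalSemiring R] {f : ι → Matrix m n R} {a : Matrix m n R}
    (hf : HasSum f a) (v : n → R) : HasSum (fun i => f i *ᵥ v) (a *ᵥ v) :=
  hf.map (mulVec.addMonoidHomLeft v) (continuous_id.matrix_mulVec continuous_const)

namespace Matrix

theorem summable_inv_pow_smul_diagonal_pow {n 𝕜 : Type*} [Fintype n] [DecidableEq n]
    [NormedField 𝕜] {d : n → 𝕜} {lam : 𝕜} (h : ∀ i, ‖d i‖ < ‖lam‖) :
    Summable (fun k : ℕ => (lam ^ (k + 1))⁻¹ • diagonal d ^ k) := by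
  simp_rw [diagonal_pow, ← diagonal_smul]
  refine Summable.matrix_diagonal (Pi.summable.2 fun i => ?_)
  have hratio : ‖d i / lam‖ < 1 := by
    rw [norm_div, div_lt_one ((norm_nonneg _).trans_lt (h i))]
    exact h i
  refine ((summable_geometric_of_norm_lt_one hratio).mul_left lam⁻¹).congr fun k => ?_
  rw [Pi.smul_apply, Pi.pow_apply, smul_eq_mul, div_pow, pow_succ', mul_inv]
  ring

section Hermitian

variable {n 𝕜 : Type*} [Fintype n] [DecidableEq n] [RCLike 𝕜] {A : Matrix n n 𝕜}

theorem IsHermitian.summable_inv_pow_smul_pow (hA : A.IsHermitian) {lam : 𝕜}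
    (h : ∀ μ ∈ spectrum ℝ A, |μ| < ‖lam‖) :
    Summable (fun k : ℕ => (lam ^ (k + 1))⁻¹ • A ^ k) := by
  set U : Matrix n n 𝕜 := ↑hA.eigenvectorUnitary
  have hpow (k : ℕ) : A ^ k = U * diagonal (RCLike.ofReal ∘ hA.eigenvalues) ^ k * star U := by
    conv_lhs => rw [hA.spectral_theorem]
    rw [← map_pow, Unitary.conjStarAlgAut_apply]
  have hD := summable_inv_pow_smul_diagonal_pow (d := RCLike.ofReal ∘ hA.eigenvalues) (lam := lam)
    fun i => by simpa using h _ (hA.eigenvalues_mem_spectrum_real i)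
  refine ((hD.mul_left U).mul_right (star U)).congr fun k => ?_
  rw [hpow, mul_smul_comm, smul_mul_assoc]

theorem IsHermitian.hasSum_inv_pow_smul_pow (hA : A.IsHermitian) {lam : 𝕜}
    (h : ∀ μ ∈ spectrum ℝ A, |μ| < ‖lam‖) :
    HasSum (fun k : ℕ => (lam ^ (k + 1))⁻¹ • A ^ k) (lam • 1 - A)⁻¹ := by
  rcases isEmpty_or_nonempty n with hn | ⟨⟨i⟩⟩
  · convert hasSum_zero <;> exact Subsingleton.elim _ _
  have hlam : lam ≠ 0 :=
    norm_pos_iff.1 ((abs_nonneg _).trans_lt (h _ (hA.eigenvalues_mem_spectrum_real i)))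
  have hS := (hA.summable_inv_pow_smul_pow h).hasSum
  rwa [inv_eq_right_inv (hS.smul_one_sub_mul_eq_one hlam)]

end Hermitian

theorem mulVec_inr_eq_of_fromBlocks_mulVec_eq_smul {l m α : Type*} [Fintype l] [Fintype m]
    [NonUnitalNonAssocSemiring α] {A : Matrix l l α} {B : Matrix l m α} {C : Matrix m l α}
    {D : Matrix m m α} {x : l ⊕ m → α} {lam : α} (h : fromBlocks A B C D *ᵥ x = lam • x) :
    C *ᵥ (x ∘ Sum.inl) + D *ᵥ (x ∘ Sum.inr) = lam • (x ∘ Sum.inr) := by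
  funext j
  simpa [fromBlocks_mulVec] using congrFun h (Sum.inr j)

theorem of_const_one_mulVec {m n α : Type*} [Fintype n] [NonAssocSemiring α] (v : n → α) :
    of (fun (_ : m) (_ : n) => (1 : α)) *ᵥ v = (∑ i, v i) • fun _ => 1 := by
  funext j
  simp [mulVec, dotProduct]

end Matrix

theorem eigenvector_neumann_series_general (p m : ℕ)
    (AL : Matrix (Fin p) (Fin p) ℝ) (AR : Matrix (Fin m) (Fin m) ℝ)
    (hAR : AR.IsSymm) (lam : ℝ)
    (hrad : ∀ μ ∈ spectrum ℝ AR, |μ| < |lam|)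
    (α : Fin p ⊕ Fin m → ℝ)
    (heig : (Matrix.fromBlocks AL (Matrix.of fun _ _ => (1 : ℝ))
        (Matrix.of fun _ _ => (1 : ℝ)) AR) *ᵥ α = lam • α) :
    (fun j => α (Sum.inr j)) =
      (∑ i, α (Sum.inl i)) • ∑' k : ℕ, (lam ^ (k + 1))⁻¹ • (AR ^ k *ᵥ fun _ => (1 : ℝ)) := by
  have hrow : (lam • 1 - AR) *ᵥ (α ∘ Sum.inr) = (∑ i, α (Sum.inl i)) • fun _ => 1 := by
    have h := mulVec_inr_eq_of_fromBlocks_mulVec_eq_smul heig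
    rw [of_const_one_mulVec] at h
    rw [sub_mulVec, smul_mulVec, one_mulVec, ← h, add_sub_cancel_right]
    rfl
  have hdet : IsUnit (lam • 1 - AR).det := by
    rw [← isUnit_iff_isUnit_det, ← Algebra.algebraMap_eq_smul_one, ← spectrum.notMem_iff]
    exact fun h => (hrad lam h).false
  have hS := (isHermitian_iff_isSymm.2 hAR).hasSum_inv_pow_smul_pow hrad
  have hv := hS.matrix_mulVec_const fun _ => 1
  simp only [smul_mulVec] at hv
  rw [hv.tsum_eq, ← mulVec_smul, ← hrow, mulVec_mulVec, nonsing_inv_mul _ hdet, one_mulVec]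
  rfl

/-- For a symmetric block matrix `A = [[A_L, J], [Jᵀ, A_R]]` with `J` the all-ones block, an
eigenvalue `λ` with `|λ|` larger than every spectral value of `A_R`, and eigenvector
`α = (α_L, α_R)`, one has `α_R = (1ᵀ α_L) ∑_{k≥0} λ^{-(k+1)} A_R^k 1`. -/
theorem eigenvector_neumann_series (p m : ℕ)
    (AL : Matrix (Fin p) (Fin p) ℝ) (AR : Matrix (Fin m) (Fin m) ℝ)
    (hAL : AL.IsSymm) (hAR : AR.IsSymm) (lam : ℝ)
    (hrad : ∀ μ ∈ spectrum ℝ AR, |μ| < |lam|)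
    (α : Fin p ⊕ Fin m → ℝ) (hα : α ≠ 0)
    (heig : (Matrix.fromBlocks AL (Matrix.of fun _ _ => (1 : ℝ))
        (Matrix.of fun _ _ => (1 : ℝ)) AR) *ᵥ α = lam • α) :
    (fun j => α (Sum.inr j)) =
      (∑ i, α (Sum.inl i)) • ∑' k : ℕ, (lam ^ (k + 1))⁻¹ • (AR ^ k *ᵥ fun _ => (1 : ℝ)) :=
  eigenvector_neumann_series_general p m AL AR hAR lam hrad α heig
end

section
/- With A = [[A_L, J],[J^T, A_R]] as above and lambda an eigenvalue of A with |lambda| greater than the spectral radii of both A_L and A_R, and with an eigenvector alpha = (alpha_L, alpha_R) such that 1^T alpha_R ≠ 0, the eigenvalue lambda satisfies lambda^2 = (sum_{k=0}^infty lambda^{-k} 1^T A_L^k 1) * (sum_{k=0}^infty lambda^{-k} 1^T A_R^k 1). -/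
open Matrix

lemma key_series_lemma {n : ℕ} (A : Matrix (Fin n) (Fin n) ℝ) (hA : A.IsHermitian) (lam : ℝ)
    (hrad : ∀ μ ∈ spectrum ℝ A, |μ| < |lam|) (s : ℝ) (v : Fin n → ℝ)
    (hv : A *ᵥ v + s • (fun _ => (1 : ℝ)) = lam • v) :
    s * (∑' k : ℕ, (lam ^ k)⁻¹ * ∑ i, (A ^ k *ᵥ fun _ => (1 : ℝ)) i) = lam * ∑ i, v i := by
  rcases Nat.eq_zero_or_pos n with hn | hn
  · subst hn
    simp
  have : Nonempty (Fin n) := ⟨⟨0, hn⟩⟩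
  set U : Matrix (Fin n) (Fin n) ℝ := (hA.eigenvectorUnitary : Matrix (Fin n) (Fin n) ℝ) with hU
  set μ : Fin n → ℝ := hA.eigenvalues with hμ
  have hlam0 : lam ≠ 0 := by
    have h := hrad (μ ⟨0, hn⟩) (hA.eigenvalues_mem_spectrum_real _)
    intro h0
    rw [h0] at h
    simp at h
    exact absurd h (not_lt.mpr (abs_nonneg _))
  have habs : ∀ i, |μ i / lam| < 1 := by
    intro i
    rw [abs_div, div_lt_one (lt_of_le_of_lt (abs_nonneg _) (hrad _ (hA.eigenvalues_mem_spectrum_real i)))]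
    exact hrad _ (hA.eigenvalues_mem_spectrum_real i)
  have hne : ∀ i, lam - μ i ≠ 0 := by
    intro i h
    have := hrad (μ i) (hA.eigenvalues_mem_spectrum_real i)
    rw [sub_eq_zero] at h
    rw [← h] at this
    exact lt_irrefl _ this
  have hspec : A = U * diagonal μ * star U := by
    have := hA.spectral_theorem
    rwa [RCLike.ofReal_real_eq_id, Function.id_comp] at this
  have hUsU : star U * U = 1 := Unitary.coe_star_mul_self hA.eigenvectorUnitary
  have hUUs : U * star U = 1 := Unitary.coe_mul_star_self hA.eigenvectorUnitary
  have hpow : ∀ k : ℕ, A ^ k = U * diagonal (fun i => μ i ^ k) * star U := by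
    intro k
    induction k with
    | zero => simp [pow_zero, hUUs, diagonal_one]
    | succ k ih =>
      rw [pow_succ, ih, hspec]
      rw [show U * diagonal (fun i => μ i ^ k) * star U * (U * diagonal μ * star U)
          = U * (diagonal (fun i => μ i ^ k) * (star U * U) * diagonal μ) * star U by
        noncomm_ring]
      rw [hUsU, mul_one, diagonal_mul_diagonal]
      have h5 : (fun i => μ i ^ k * μ i) = fun i => μ i ^ (k + 1) := by
        funext i; rw [pow_succ]
      rw [h5]
  set w : Fin n → ℝ := star U *ᵥ (fun _ => (1 : ℝ)) with hw
  set u : Fin n → ℝ := star U *ᵥ v with hu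
  have hsum_eq : ∀ (y : Fin n → ℝ), ∑ i, (U *ᵥ y) i = ∑ i, w i * y i := by
    intro y
    have : ∑ i, (U *ᵥ y) i = (fun _ => (1:ℝ)) ⬝ᵥ (U *ᵥ y) := by simp [dotProduct]
    rw [this, dotProduct_mulVec, ← mulVec_transpose]
    have hT : Uᵀ = star U := by
      rw [Matrix.star_eq_conjTranspose, conjTranspose_eq_transpose_of_trivial]
    rw [hT]
    simp [dotProduct, hw]
  have h1Ak : ∀ k : ℕ, ∑ i, (A ^ k *ᵥ fun _ => (1:ℝ)) i = ∑ i, w i ^ 2 * μ i ^ k := by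
    intro k
    rw [hpow k, ← mulVec_mulVec, ← mulVec_mulVec, hsum_eq]
    congr 1
    funext i
    rw [mulVec_diagonal]
    ring
  have huval : ∀ i, u i = s * w i / (lam - μ i) := by
    intro i
    have h2 : star U *ᵥ (A *ᵥ v) + s • w = lam • u := by
      rw [← mulVec_smul, ← mulVec_smul, ← mulVec_add, hv]
    have h3 : star U *ᵥ (A *ᵥ v) = diagonal μ *ᵥ u := by
      rw [hspec, ← mulVec_mulVec, ← mulVec_mulVec, mulVec_mulVec, mulVec_mulVec, hUsU]
      rw [← mulVec_mulVec, one_mulVec]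
    rw [h3] at h2
    have h4 := congrFun h2 i
    simp only [Pi.add_apply, Pi.smul_apply, smul_eq_mul, mulVec_diagonal] at h4
    rw [eq_div_iff (hne i)]
    linarith [h4]
  have hvsum : ∑ i, v i = ∑ i, w i * u i := by
    have hvU : v = U *ᵥ u := by
      rw [hu, mulVec_mulVec, hUUs, one_mulVec]
    rw [hvU, hsum_eq]
  -- now compute the tsum
  have hterm : ∀ k : ℕ, (lam ^ k)⁻¹ * ∑ i, (A ^ k *ᵥ fun _ => (1:ℝ)) i
      = ∑ i ∈ Finset.univ, w i ^ 2 * (μ i / lam) ^ k := by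
    intro k
    rw [h1Ak k, Finset.mul_sum]
    congr 1
    funext i
    rw [div_pow]
    field_simp
  rw [tsum_congr hterm, Summable.tsum_finsetSum (fun i _ => Summable.mul_left _ (summable_geometric_of_abs_lt_one (habs i)))]
  have : ∀ i ∈ Finset.univ, (∑' k : ℕ, w i ^ 2 * (μ i / lam) ^ k) = w i ^ 2 * (lam / (lam - μ i)) := by
    intro i _
    rw [tsum_mul_left, tsum_geometric_of_abs_lt_one (habs i)]
    congr 1
    have h6 : 1 - μ i / lam = (lam - μ i) / lam := by field_simp
    rw [h6, inv_div]
  rw [Finset.sum_congr rfl this, hvsum, Finset.mul_sum, Finset.mul_sum]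
  congr 1
  funext i
  rw [huval i]
  field_simp

/-- For a symmetric block matrix `A = [[A_L, J], [Jᵀ, A_R]]` with `J` the all-ones block, an
eigenvalue `λ` with `|λ|` larger than every spectral value of `A_L` and of `A_R`, and an
eigenvector `α = (α_L, α_R)` with `1ᵀ α_R ≠ 0`, the eigenvalue satisfies
`λ² = (∑_{k≥0} λ^{-k} 1ᵀ A_L^k 1) (∑_{k≥0} λ^{-k} 1ᵀ A_R^k 1)`. -/
theorem eigenvalue_series_equation (p m : ℕ)
    (AL : Matrix (Fin p) (Fin p) ℝ) (AR : Matrix (Fin m) (Fin m) ℝ)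
    (hAL : AL.IsSymm) (hAR : AR.IsSymm) (lam : ℝ)
    (hradL : ∀ μ ∈ spectrum ℝ AL, |μ| < |lam|)
    (hradR : ∀ μ ∈ spectrum ℝ AR, |μ| < |lam|)
    (α : Fin p ⊕ Fin m → ℝ) (hα : α ≠ 0)
    (heig : (Matrix.fromBlocks AL (Matrix.of fun _ _ => (1 : ℝ))
        (Matrix.of fun _ _ => (1 : ℝ)) AR) *ᵥ α = lam • α)
    (hsum : (∑ j, α (Sum.inr j)) ≠ 0) :
    lam ^ 2 =
      (∑' k : ℕ, (lam ^ k)⁻¹ * ∑ i, (AL ^ k *ᵥ fun _ => (1 : ℝ)) i) *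
      (∑' k : ℕ, (lam ^ k)⁻¹ * ∑ j, (AR ^ k *ᵥ fun _ => (1 : ℝ)) j) := by
  have hAL' : AL.IsHermitian := by
    rwa [Matrix.IsHermitian, conjTranspose_eq_transpose_of_trivial]
  have hAR' : AR.IsHermitian := by
    rwa [Matrix.IsHermitian, conjTranspose_eq_transpose_of_trivial]
  have hm : 0 < m := by
    rcases Nat.eq_zero_or_pos m with h | h
    · subst h; exact absurd (by simp : (∑ j : Fin 0, α (Sum.inr j)) = 0) hsum
    · exact h
  set sL : ℝ := ∑ i, α (Sum.inl i) with hsL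
  set sR : ℝ := ∑ j, α (Sum.inr j) with hsR
  have hlam0 : lam ≠ 0 := by
    have h := hradR (hAR'.eigenvalues ⟨0, hm⟩) (hAR'.eigenvalues_mem_spectrum_real _)
    intro h0
    rw [h0] at h
    simp at h
    exact absurd h (not_lt.mpr (abs_nonneg _))
  rw [fromBlocks_mulVec] at heig
  have hL : AL *ᵥ (α ∘ Sum.inl) + sR • (fun _ => (1 : ℝ)) = lam • (α ∘ Sum.inl) := by
    funext i
    have h := congrFun heig (Sum.inl i)
    simp only [Sum.elim_inl, Pi.add_apply, Pi.smul_apply, smul_eq_mul,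
      Function.comp_apply, mul_one] at h ⊢
    rw [← h]
    congr 1
    simp [mulVec, dotProduct, hsR]
  have hR : AR *ᵥ (α ∘ Sum.inr) + sL • (fun _ => (1 : ℝ)) = lam • (α ∘ Sum.inr) := by
    funext j
    have h := congrFun heig (Sum.inr j)
    simp only [Sum.elim_inr, Pi.add_apply, Pi.smul_apply, smul_eq_mul,
      Function.comp_apply, mul_one] at h ⊢
    rw [← h]
    rw [add_comm]
    congr 1
    simp [mulVec, dotProduct, hsL]
  have eqL := key_series_lemma AL hAL' lam hradL sR (α ∘ Sum.inl) hL
  have eqR := key_series_lemma AR hAR' lam hradR sL (α ∘ Sum.inr) hR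
  simp only [Function.comp] at eqL eqR
  rw [← hsL] at eqL
  rw [← hsR] at eqR
  have hsL0 : sL ≠ 0 := by
    intro h
    rw [h, zero_mul] at eqR
    exact hsum (by rw [hsR] at *; exact (mul_eq_zero.mp eqR.symm).resolve_left hlam0)
  apply mul_left_cancel₀ (mul_ne_zero hsum hsL0)
  calc sR * sL * lam ^ 2 = (lam * sL) * (lam * sR) := by ring
    _ = (sR * ∑' k : ℕ, (lam ^ k)⁻¹ * ∑ i, (AL ^ k *ᵥ fun _ => (1 : ℝ)) i) *
        (sL * ∑' k : ℕ, (lam ^ k)⁻¹ * ∑ j, (AR ^ k *ᵥ fun _ => (1 : ℝ)) j) := by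
      rw [eqL, eqR]
    _ = sR * sL *
        ((∑' k : ℕ, (lam ^ k)⁻¹ * ∑ i, (AL ^ k *ᵥ fun _ => (1 : ℝ)) i) *
         (∑' k : ℕ, (lam ^ k)⁻¹ * ∑ j, (AR ^ k *ᵥ fun _ => (1 : ℝ)) j)) := by ring
end

section
/- Let s >= 2, t >= 2, n, ℓ be positive integers with n - s + 1 - ℓ*t >= 0, and let G_ℓ = (s-1)K_1 ∨ (ℓ K_t ∪ (n-s+1-ℓt)P_1). Then every eigenvalue lambda of the adjacency matrix of G_ℓ with |lambda| > t-1 satisfies lambda^3 - (t-1)lambda^2 - (s-1)(n-s+1)lambda + (s-1)(t-1)(n-s+1-ℓt) = 0. -/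
/-- The disjoint union of two simple graphs, with no edges between the two parts. -/
def graphDisjUnion {α β : Type*} (G : SimpleGraph α) (H : SimpleGraph β) :
    SimpleGraph (α ⊕ β) where
  Adj x y :=
    match x, y with
    | Sum.inl a, Sum.inl b => G.Adj a b
    | Sum.inr a, Sum.inr b => H.Adj a b
    | _, _ => False
  symm := by
    constructor
    rintro (a | a) (b | b) h
    · exact G.adj_symm h
    · exact h.elim
    · exact h.elim
    · exact H.adj_symm h
  loopless := by
    constructor
    rintro (a | a) h
    · exact G.irrefl h
    · exact H.irrefl h

instance graphDisjUnion.decidableRel {α β : Type*} (G : SimpleGraph α) (H : SimpleGraph β)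
    [dG : DecidableRel G.Adj] [dH : DecidableRel H.Adj] :
    DecidableRel (graphDisjUnion G H).Adj := fun x y =>
  match x, y with
  | Sum.inl a, Sum.inl b => dG a b
  | Sum.inr a, Sum.inr b => dH a b
  | Sum.inl _, Sum.inr _ => Decidable.isFalse id
  | Sum.inr _, Sum.inl _ => Decidable.isFalse id

/-- The disjoint union `q K_t` of `q` copies of the complete graph `K_t`. -/
def cliquesUnion (q t : ℕ) : SimpleGraph (Fin q × Fin t) where
  Adj x y := x.1 = y.1 ∧ x ≠ y
  symm := ⟨fun x y h => ⟨h.1.symm, h.2.symm⟩⟩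
  loopless := ⟨fun x h => h.2 rfl⟩

instance cliquesUnion.decidableRel (q t : ℕ) : DecidableRel (cliquesUnion q t).Adj :=
  fun x y => inferInstanceAs (Decidable (x.1 = y.1 ∧ x ≠ y))

/-- Every eigenvalue `λ` of `G_ℓ = (s-1)K_1 ∨ (ℓ K_t ∪ (n-s+1-ℓt) P_1)` with `|λ| > t-1`
satisfies `λ³ - (t-1)λ² - (s-1)(n-s+1)λ + (s-1)(t-1)(n-s+1-ℓt) = 0`. -/
theorem cubic_eigenvalue_equation (s t n ℓ : ℕ)
    (hs : 2 ≤ s) (ht : 2 ≤ t) (hn : 1 ≤ n) (hℓ : 1 ≤ ℓ)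
    (hsn : s ≤ n) (hlt : ℓ * t ≤ n - s + 1) :
    let G := graphJoin (⊥ : SimpleGraph (Fin (s - 1)))
      (graphDisjUnion (cliquesUnion ℓ t) (⊥ : SimpleGraph (Fin (n - s + 1 - ℓ * t))))
    ∀ lam ∈ spectrum ℝ (G.adjMatrix ℝ), (t : ℝ) - 1 < |lam| →
      lam ^ 3 - ((t : ℝ) - 1) * lam ^ 2 - ((s : ℝ) - 1) * ((n : ℝ) - (s : ℝ) + 1) * lam +
        ((s : ℝ) - 1) * ((t : ℝ) - 1) * ((n : ℝ) - (s : ℝ) + 1 - (ℓ : ℝ) * (t : ℝ)) = 0 := by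
  intro G lam hmem habs
  -- basic scalar facts
  have ht1 : (1:ℝ) ≤ (t:ℝ) - 1 := by
    have : (2:ℝ) ≤ (t:ℝ) := by exact_mod_cast ht
    linarith
  have hlam0 : lam ≠ 0 := by
    intro h; rw [h, abs_zero] at habs; linarith
  have hlamt : lam - ((t:ℝ) - 1) ≠ 0 := by
    intro h
    have : lam = (t:ℝ) - 1 := by linarith
    rw [this] at habs
    rw [abs_of_nonneg (by linarith)] at habs
    linarith
  have hlam1 : lam + 1 ≠ 0 := by
    intro h
    have : lam = -1 := by linarith
    rw [this] at habs; simp at habs; linarith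
  -- eigenvector
  rw [← AlgEquiv.spectrum_eq (Matrix.toLinAlgEquiv' :
    Matrix (Fin (s - 1) ⊕ Fin ℓ × Fin t ⊕ Fin (n - s + 1 - ℓ * t)) _ ℝ ≃ₐ[ℝ] _)] at hmem
  have hev : Module.End.HasEigenvalue (Matrix.toLinAlgEquiv' (G.adjMatrix ℝ)) lam :=
    Module.End.hasEigenvalue_iff_mem_spectrum.mpr hmem
  obtain ⟨v, hv1, hvne⟩ := hev.exists_hasEigenvector
  have hmul : (G.adjMatrix ℝ).mulVec v = lam • v := by
    have := Module.End.mem_eigenspace_iff.mp hv1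
    simpa [Matrix.toLinAlgEquiv'_apply, Matrix.toLin'_apply] using this
  have hvx : ∀ x, (∑ y, if G.Adj x y then v y else 0) = lam * v x := by
    intro x
    have := congrFun hmul x
    simpa [Matrix.mulVec, dotProduct, SimpleGraph.adjMatrix_apply, ite_mul] using this
  -- notation for partial sums
  set σ : ℝ := ∑ u : Fin (s-1), v (Sum.inl u) with hσ
  set C : Fin ℓ → ℝ := fun i => ∑ j : Fin t, v (Sum.inr (Sum.inl (i, j))) with hC
  set Ct : ℝ := ∑ i, C i with hCt
  set It : ℝ := ∑ w : Fin (n - s + 1 - ℓ * t), v (Sum.inr (Sum.inr w)) with hIt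
  -- adjacency simplifications
  have adjSS : ∀ u u' : Fin (s-1), ¬ G.Adj (Sum.inl u) (Sum.inl u') := fun u u' h => h
  have adjSR : ∀ (u : Fin (s-1)) (p : Fin ℓ × Fin t ⊕ Fin (n - s + 1 - ℓ * t)),
      G.Adj (Sum.inl u) (Sum.inr p) := fun _ _ => trivial
  have adjRS : ∀ (u : Fin (s-1)) (p : Fin ℓ × Fin t ⊕ Fin (n - s + 1 - ℓ * t)),
      G.Adj (Sum.inr p) (Sum.inl u) := fun _ _ => trivial
  have adjCC : ∀ p q : Fin ℓ × Fin t,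
      G.Adj (Sum.inr (Sum.inl p)) (Sum.inr (Sum.inl q)) ↔ (p.1 = q.1 ∧ p ≠ q) := fun _ _ => Iff.rfl
  have adjCI : ∀ (p : Fin ℓ × Fin t) (w : Fin (n - s + 1 - ℓ * t)),
      ¬ G.Adj (Sum.inr (Sum.inl p)) (Sum.inr (Sum.inr w)) := fun _ _ h => h
  have adjIC : ∀ (p : Fin ℓ × Fin t) (w : Fin (n - s + 1 - ℓ * t)),
      ¬ G.Adj (Sum.inr (Sum.inr w)) (Sum.inr (Sum.inl p)) := fun _ _ h => h
  have adjII : ∀ w w' : Fin (n - s + 1 - ℓ * t), ¬ G.Adj (Sum.inr (Sum.inr w)) (Sum.inr (Sum.inr w')) :=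
    fun _ _ h => h
  -- equation for S vertices
  have eqS : ∀ u : Fin (s-1), lam * v (Sum.inl u) = Ct + It := by
    intro u
    rw [← hvx (Sum.inl u)]
    rw [Fintype.sum_sum_type]
    simp only [adjSS, adjSR, if_neg, if_pos, not_false_iff, if_true, if_false]
    rw [Fintype.sum_sum_type]
    simp [hCt, hIt, hC, Fintype.sum_prod_type]
  -- equation for I vertices
  have eqI : ∀ w : Fin (n - s + 1 - ℓ * t), lam * v (Sum.inr (Sum.inr w)) = σ := by
    intro w
    rw [← hvx (Sum.inr (Sum.inr w))]
    rw [Fintype.sum_sum_type]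
    simp only [adjRS, if_pos]
    rw [Fintype.sum_sum_type]
    simp [adjIC, adjII, hσ]
  -- equation for clique vertices
  have eqC : ∀ (i : Fin ℓ) (j : Fin t),
      lam * v (Sum.inr (Sum.inl (i, j))) = σ + C i - v (Sum.inr (Sum.inl (i, j))) := by
    intro i j
    rw [← hvx (Sum.inr (Sum.inl (i, j)))]
    rw [Fintype.sum_sum_type]
    rw [Fintype.sum_sum_type]
    have h1 : ∀ w : Fin (n - s + 1 - ℓ * t),
        (if G.Adj (Sum.inr (Sum.inl (i,j))) (Sum.inr (Sum.inr w)) then v (Sum.inr (Sum.inr w)) else 0) = 0 := by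
      intro w; rw [if_neg (adjCI _ _)]
    have h2 : ∀ u : Fin (s-1),
        (if G.Adj (Sum.inr (Sum.inl (i,j))) (Sum.inl u) then v (Sum.inl u) else 0) = v (Sum.inl u) := by
      intro u; rw [if_pos (adjRS _ _)]
    rw [Finset.sum_congr rfl (fun u _ => h2 u), Finset.sum_congr rfl (fun w _ => h1 w)]
    rw [Finset.sum_const, smul_zero, add_zero]
    have key : (∑ p : Fin ℓ × Fin t,
        if G.Adj (Sum.inr (Sum.inl (i,j))) (Sum.inr (Sum.inl p)) then v (Sum.inr (Sum.inl p)) else 0)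
        = C i - v (Sum.inr (Sum.inl (i, j))) := by
      have step : ∀ p : Fin ℓ × Fin t,
          (if G.Adj (Sum.inr (Sum.inl (i,j))) (Sum.inr (Sum.inl p)) then v (Sum.inr (Sum.inl p)) else 0)
          = (if p.1 = i then v (Sum.inr (Sum.inl p)) else 0)
            - (if p = (i,j) then v (Sum.inr (Sum.inl p)) else 0) := by
        intro p
        simp only [adjCC]
        rcases p with ⟨pi, pj⟩
        by_cases hp : (pi, pj) = ((i, j) : Fin ℓ × Fin t)
        · cases hp
          simp
        · have h' : ((i, j) : Fin ℓ × Fin t) ≠ (pi, pj) := fun h => hp h.symm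
          simp only [hp, h', ne_eq, not_false_iff, and_true, if_neg, if_false, sub_zero]
          by_cases hpi : pi = i
          · simp [hpi]
          · have : ¬ (i = pi) := fun h => hpi h.symm
            simp [hpi, this]
      rw [Finset.sum_congr rfl (fun p _ => step p), Finset.sum_sub_distrib]
      have s2 : (∑ p : Fin ℓ × Fin t, if p = ((i,j) : Fin ℓ × Fin t)
          then v (Sum.inr (Sum.inl p)) else 0) = v (Sum.inr (Sum.inl (i, j))) := by
        simp [Finset.sum_ite_eq']
      rw [s2]
      congr 1
      rw [Fintype.sum_prod_type]
      have s3 : ∀ i' : Fin ℓ, (∑ j' : Fin t,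
          if (i', j').1 = i then v (Sum.inr (Sum.inl (i', j'))) else 0)
          = if i' = i then C i' else 0 := by
        intro i'
        by_cases hi : i' = i <;> simp [hi, hC]
      rw [Finset.sum_congr rfl (fun i' _ => s3 i')]
      simp [Finset.sum_ite_eq']
    rw [key, hσ]
    ring
  -- casts
  have cs : ((s - 1 : ℕ) : ℝ) = (s : ℝ) - 1 := by
    rw [Nat.cast_sub (by omega : 1 ≤ s)]; norm_num
  have cm : ((n - s + 1 - ℓ * t : ℕ) : ℝ) = (n : ℝ) - s + 1 - ℓ * t := by
    rw [Nat.cast_sub hlt, Nat.cast_add, Nat.cast_sub hsn, Nat.cast_mul, Nat.cast_one]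
  -- summed equations
  have e1 : lam * σ = ((s : ℝ) - 1) * (Ct + It) := by
    have : ∑ u : Fin (s - 1), lam * v (Sum.inl u) = ∑ _u : Fin (s - 1), (Ct + It) :=
      Finset.sum_congr rfl fun u _ => eqS u
    rw [Finset.sum_const, Finset.card_univ, Fintype.card_fin, ← Finset.mul_sum, ← hσ,
      nsmul_eq_mul, cs] at this
    exact this
  have e3 : lam * It = ((n : ℝ) - s + 1 - ℓ * t) * σ := by
    have : ∑ w : Fin (n - s + 1 - ℓ * t), lam * v (Sum.inr (Sum.inr w))
        = ∑ _w : Fin (n - s + 1 - ℓ * t), σ := Finset.sum_congr rfl fun w _ => eqI w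
    rw [Finset.sum_const, Finset.card_univ, Fintype.card_fin, ← Finset.mul_sum, ← hIt,
      nsmul_eq_mul, cm] at this
    exact this
  have eCi : ∀ i : Fin ℓ, (lam - ((t : ℝ) - 1)) * C i = (t : ℝ) * σ := by
    intro i
    have h := Finset.sum_congr rfl fun j (_ : j ∈ Finset.univ) => eqC i j
    rw [← Finset.mul_sum, Finset.sum_sub_distrib, Finset.sum_add_distrib,
      Finset.sum_const, Finset.sum_const, Finset.card_univ, Fintype.card_fin,
      nsmul_eq_mul, nsmul_eq_mul] at h
    have hCi : (∑ j : Fin t, v (Sum.inr (Sum.inl (i, j)))) = C i := by rw [hC]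
    rw [hCi] at h
    linarith [h]
  have e2 : (lam - ((t : ℝ) - 1)) * Ct = (ℓ : ℝ) * t * σ := by
    have : ∑ i : Fin ℓ, (lam - ((t : ℝ) - 1)) * C i = ∑ _i : Fin ℓ, (t : ℝ) * σ :=
      Finset.sum_congr rfl fun i _ => eCi i
    rw [Finset.sum_const, Finset.card_univ, Fintype.card_fin, ← Finset.mul_sum, ← hCt,
      nsmul_eq_mul] at this
    rw [this]; ring
  -- sigma is nonzero
  have hσne : σ ≠ 0 := by
    intro h0
    apply hvne
    have hIt0 : It = 0 := by
      have := e3; rw [h0, mul_zero] at this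
      exact (mul_eq_zero.mp this).resolve_left hlam0
    have hCi0 : ∀ i, C i = 0 := by
      intro i
      have := eCi i; rw [h0, mul_zero] at this
      exact (mul_eq_zero.mp this).resolve_left hlamt
    have hCt0 : Ct = 0 := by rw [hCt]; exact Finset.sum_eq_zero fun i _ => hCi0 i
    funext x
    rcases x with u | p | w
    · have := eqS u; rw [hCt0, hIt0, add_zero] at this
      have := (mul_eq_zero.mp this).resolve_left hlam0
      simpa using this
    · rcases p with ⟨i, j⟩
      have := eqC i j; rw [h0, hCi0 i, add_zero, zero_sub] at this
      have h2 : (lam + 1) * v (Sum.inr (Sum.inl (i, j))) = 0 := by linarith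
      have := (mul_eq_zero.mp h2).resolve_left hlam1
      simpa using this
    · have := eqI w; rw [h0] at this
      have := (mul_eq_zero.mp this).resolve_left hlam0
      simpa using this
  -- main polynomial identity
  have key : (lam ^ 3 - ((t : ℝ) - 1) * lam ^ 2 - ((s : ℝ) - 1) * ((n : ℝ) - s + 1) * lam
      + ((s : ℝ) - 1) * ((t : ℝ) - 1) * ((n : ℝ) - s + 1 - ℓ * t)) * σ = 0 := by
    linear_combination (lam * (lam - ((t : ℝ) - 1))) * e1 + (((s : ℝ) - 1) * lam) * e2
      + (((s : ℝ) - 1) * (lam - ((t : ℝ) - 1))) * e3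
  have := (mul_eq_zero.mp key).resolve_right hσne
  linarith [this]
end
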